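/- arXiv:2110.02480 — 7 statements merged into one kernel-verified Lean document; each statement's English description precedes it below -/
import Mathlib

section
/- Let P be a PEKB. Write Γ for the set of propositional literals belonging to P, and for each agent i write Ψ_i = {ψ : ◇_i ψ ∈ P} and X_i = {χ : B_i χ ∈ P}. Then P is inconsistent in KD_n if and only if at least one of the following holds: (a) Γ is inconsistent; (b) for some agent i and some ψ ∈ Ψ_i, the set {ψ} ∪ X_i is inconsistent; (c) for some agent i, the set X_i is inconsistent. -/
/-- Modal formulae over atomic propositions `Atom` and agents `Agt`. -/
inductive Form (Atom Agt : Type) : Type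
  | top : Form Atom Agt
  | bot : Form Atom Agt
  | atom : Atom → Form Atom Agt
  | neg : Form Atom Agt → Form Atom Agt
  | and : Form Atom Agt → Form Atom Agt → Form Atom Agt
  | box : Agt → Form Atom Agt → Form Atom Agt

/-- `◇_i φ` abbreviates `¬ B_i ¬ φ`. -/
def Form.dia {Atom Agt : Type} (i : Agt) (φ : Form Atom Agt) : Form Atom Agt :=
  Form.neg (Form.box i (Form.neg φ))

/-- A Kripke structure: worlds, a valuation, and an accessibility relation per agent. -/
structure Kripke (Atom Agt : Type) where
  W : Type
  val : W → Atom → Prop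
  R : Agt → W → W → Prop

/-- Every accessibility relation is serial: every world has a successor. -/
def Kripke.Serial {Atom Agt : Type} (M : Kripke Atom Agt) : Prop :=
  ∀ (i : Agt) (w : M.W), ∃ v : M.W, M.R i w v

/-- Satisfaction of a formula at a world of a Kripke structure. -/
def Sat {Atom Agt : Type} (M : Kripke Atom Agt) : M.W → Form Atom Agt → Prop
  | _, Form.top => True
  | _, Form.bot => False
  | w, Form.atom p => M.val w p
  | w, Form.neg φ => ¬ Sat M w φ
  | w, Form.and φ ψ => Sat M w φ ∧ Sat M w ψ
  | w, Form.box i φ => ∀ v : M.W, M.R i w v → Sat M v φ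

/-- KD_n entailment from a set of formulae: truth at every world of every serial
Kripke structure satisfying all members of `S`. -/
def SetEntails {Atom Agt : Type} (S : Set (Form Atom Agt)) (φ : Form Atom Agt) : Prop :=
  ∀ (M : Kripke Atom Agt), M.Serial → ∀ w : M.W, (∀ ψ ∈ S, Sat M w ψ) → Sat M w φ

/-- KD_n entailment between single formulae. -/
def Entails {Atom Agt : Type} (φ ψ : Form Atom Agt) : Prop :=
  SetEntails {φ} ψ

/-- A set of formulae is consistent iff all its members hold simultaneously at
some world of some serial Kripke structure. -/
def Consistent {Atom Agt : Type} (S : Set (Form Atom Agt)) : Prop :=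
  ∃ (M : Kripke Atom Agt), M.Serial ∧ ∃ w : M.W, ∀ ψ ∈ S, Sat M w ψ

/-- Restricted modal literals: a (possibly empty) sequence of `B_i`/`◇_i`
operators applied to a propositional literal. -/
inductive IsRML {Atom Agt : Type} : Form Atom Agt → Prop
  | pos (p : Atom) : IsRML (Form.atom p)
  | neg (p : Atom) : IsRML (Form.neg (Form.atom p))
  | box (i : Agt) {φ : Form Atom Agt} : IsRML φ → IsRML (Form.box i φ)
  | dia (i : Agt) {φ : Form Atom Agt} : IsRML φ → IsRML (Form.dia i φ)

/-- A proper epistemic knowledge base: a finite set of RMLs. -/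
def IsPEKB {Atom Agt : Type} (S : Set (Form Atom Agt)) : Prop :=
  S.Finite ∧ ∀ φ ∈ S, IsRML φ

/-- Entailment of every member of a set (PEKB) from a set. -/
def KBEntails {Atom Agt : Type} (S T : Set (Form Atom Agt)) : Prop :=
  ∀ φ ∈ T, SetEntails S φ

/-- Logical equivalence of two sets of formulae. -/
def KBEquiv {Atom Agt : Type} (S T : Set (Form Atom Agt)) : Prop :=
  KBEntails S T ∧ KBEntails T S

/-- Upward closure: the RMLs entailed by some member of `S`. -/
def upSet {Atom Agt : Type} (S : Set (Form Atom Agt)) : Set (Form Atom Agt) :=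
  {ψ | IsRML ψ ∧ ∃ φ ∈ S, Entails φ ψ}

/-- Downward closure: the RMLs entailing some member of `S`. -/
def downSet {Atom Agt : Type} (S : Set (Form Atom Agt)) : Set (Form Atom Agt) :=
  {ψ | IsRML ψ ∧ ∃ φ ∈ S, Entails ψ φ}

/-- Maximal elements of a set of RMLs under entailment. -/
def maxSet {Atom Agt : Type} (S : Set (Form Atom Agt)) : Set (Form Atom Agt) :=
  {φ ∈ S | ∀ ψ ∈ S, Entails ψ φ → Entails φ ψ}

/-- NNF-negation of an RML: push the negation through the modalities. -/
def nnfNeg {Atom Agt : Type} : Form Atom Agt → Form Atom Agt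
  | Form.atom p => Form.neg (Form.atom p)
  | Form.neg (Form.atom p) => Form.atom p
  | Form.neg (Form.box i (Form.neg φ)) => Form.box i (nnfNeg φ)
  | Form.box i φ => Form.dia i (nnfNeg φ)
  | φ => φ

/-- NNF-negation of every member of a PEKB. -/
def negKB {Atom Agt : Type} (S : Set (Form Atom Agt)) : Set (Form Atom Agt) :=
  nnfNeg '' S

/-- Belief erasure: `P ⊖ Q = max(↑P ∖ ↓Q)`. -/
def eraseKB {Atom Agt : Type} (P Q : Set (Form Atom Agt)) : Set (Form Atom Agt) :=
  maxSet (upSet P \ downSet Q)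

/-- Belief update: `P ⋄ Q = max((P ⊖ ¬Q) ∪ Q)`. -/
def updateKB {Atom Agt : Type} (P Q : Set (Form Atom Agt)) : Set (Form Atom Agt) :=
  maxSet (eraseKB P (negKB Q) ∪ Q)

/-- Meet: `P ⊓ Q = max(↑P ∩ ↑Q)`. -/
def meetKB {Atom Agt : Type} (P Q : Set (Form Atom Agt)) : Set (Form Atom Agt) :=
  maxSet (upSet P ∩ upSet Q)


section Aux
variable {Atom Agt : Type}

private lemma sat_of_bisim {M N : Kripke Atom Agt} (f : M.W → N.W)
    (hval : ∀ w p, M.val w p ↔ N.val (f w) p)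
    (hfor : ∀ i w v, M.R i w v → N.R i (f w) (f v))
    (hback : ∀ i w v', N.R i (f w) v' → ∃ v, v' = f v ∧ M.R i w v) :
    ∀ (φ : Form Atom Agt) (w : M.W), Sat M w φ ↔ Sat N (f w) φ := by
  intro φ
  induction φ with
  | top => intro w; simp [Sat]
  | bot => intro w; simp [Sat]
  | atom p => intro w; exact hval w p
  | neg φ ih => intro w; simp only [Sat]; rw [ih w]
  | and φ ψ ih1 ih2 => intro w; simp only [Sat]; rw [ih1 w, ih2 w]
  | box i φ ih =>
    intro w
    simp only [Sat]
    constructor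
    · intro h v' hr
      obtain ⟨v, rfl, hrv⟩ := hback i w v' hr
      exact (ih v).mp (h v hrv)
    · intro h v hrv
      exact (ih v).mpr (h (f v) (hfor i w v hrv))

private lemma rml_shape {φ : Form Atom Agt} (h : IsRML φ) :
    (∃ p, φ = Form.atom p ∨ φ = Form.neg (Form.atom p)) ∨
    (∃ i χ, φ = Form.box i χ) ∨ (∃ i ψ, φ = Form.dia i ψ) := by
  cases h with
  | pos p => exact Or.inl ⟨p, Or.inl rfl⟩
  | neg p => exact Or.inl ⟨p, Or.inr rfl⟩
  | box i h => exact Or.inr (Or.inl ⟨i, _, rfl⟩)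
  | dia i h => exact Or.inr (Or.inr ⟨i, _, rfl⟩)

/-- Root world plus a disjoint family of models hanging under it. -/
private def bigModel (M0 : Kripke Atom Agt) (w0 : M0.W) {J : Type}
    (Mj : J → Kripke Atom Agt) (ag : J → Agt) (wj : ∀ j, (Mj j).W) :
    Kripke Atom Agt where
  W := Unit ⊕ (Σ j : J, (Mj j).W)
  val x p := match x with
    | .inl _ => M0.val w0 p
    | .inr q => (Mj q.1).val q.2 p
  R i x y := match x with
    | .inl _ => ∃ j, ag j = i ∧ y = Sum.inr ⟨j, wj j⟩
    | .inr q => ∃ v, y = Sum.inr ⟨q.1, v⟩ ∧ (Mj q.1).R i q.2 v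

private lemma bigModel_serial (M0 : Kripke Atom Agt) (w0 : M0.W) {J : Type}
    (Mj : J → Kripke Atom Agt) (ag : J → Agt) (wj : ∀ j, (Mj j).W)
    (hser : ∀ j, (Mj j).Serial) (hag : ∀ i : Agt, ∃ j, ag j = i) :
    (bigModel M0 w0 Mj ag wj).Serial := by
  intro i x
  cases x with
  | inl _ =>
    obtain ⟨j, hj⟩ := hag i
    exact ⟨Sum.inr ⟨j, wj j⟩, ⟨j, hj, rfl⟩⟩
  | inr q =>
    obtain ⟨v, hv⟩ := hser q.1 i q.2
    exact ⟨Sum.inr ⟨q.1, v⟩, ⟨v, rfl, hv⟩⟩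

private lemma bigModel_sat (M0 : Kripke Atom Agt) (w0 : M0.W) {J : Type}
    (Mj : J → Kripke Atom Agt) (ag : J → Agt) (wj : ∀ j, (Mj j).W) (j : J) :
    ∀ (φ : Form Atom Agt) (u : (Mj j).W),
      Sat (Mj j) u φ ↔ Sat (bigModel M0 w0 Mj ag wj) (Sum.inr ⟨j, u⟩) φ := by
  apply sat_of_bisim (M := Mj j) (N := bigModel M0 w0 Mj ag wj)
    (f := fun u => Sum.inr ⟨j, u⟩)
  · intro w p; exact Iff.rfl
  · intro i w v h; exact ⟨v, rfl, h⟩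
  · rintro i w v' ⟨v, rfl, hv⟩
    exact ⟨v, rfl, hv⟩

end Aux

/-- A PEKB `P` is inconsistent in KD_n iff (a) its set of
propositional literals is inconsistent, or (b) for some agent `i` and some
`ψ` with `◇_i ψ ∈ P`, the set `{ψ} ∪ {χ | B_i χ ∈ P}` is inconsistent, or
(c) for some agent `i`, the set `{χ | B_i χ ∈ P}` is inconsistent. -/
theorem pekb_inconsistency_characterization {Atom Agt : Type}
    (P : Set (Form Atom Agt)) (hP : IsPEKB P) :
    ¬ Consistent P ↔
      (¬ Consistent {φ ∈ P | ∃ p : Atom, φ = Form.atom p ∨ φ = Form.neg (Form.atom p)}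
        ∨ (∃ (i : Agt) (ψ : Form Atom Agt), Form.dia i ψ ∈ P ∧
            ¬ Consistent ({ψ} ∪ {χ | Form.box i χ ∈ P}))
        ∨ (∃ i : Agt, ¬ Consistent {χ | Form.box i χ ∈ P})) := by
  constructor
  · intro hinc
    by_contra hcon
    push_neg at hcon
    obtain ⟨hA, hB, hC⟩ := hcon
    obtain ⟨M0, _, w0, h0⟩ := hA
    -- index type for the child models
    set X : Agt → Set (Form Atom Agt) := fun i => {χ | Form.box i χ ∈ P} with hX
    let J : Type := Σ i : Agt, Option {ψ : Form Atom Agt // Form.dia i ψ ∈ P}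
    let Sets : J → Set (Form Atom Agt) := fun j =>
      match j with
      | ⟨i, none⟩ => X i
      | ⟨i, some ψ⟩ => {ψ.1} ∪ X i
    have hmod : ∀ j : J, ∃ Mj : Kripke Atom Agt, Mj.Serial ∧
        ∃ wj : Mj.W, ∀ φ ∈ Sets j, Sat Mj wj φ := by
      rintro ⟨i, (_ | ⟨ψ, hψ⟩)⟩
      · exact hC i
      · exact hB i ψ hψ
    choose Mj hser wj hsat using hmod
    let ag : J → Agt := fun j => j.1
    let BigM := bigModel M0 w0 Mj ag wj
    have hXsub : ∀ j : J, X j.1 ⊆ Sets j := by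
      rintro ⟨i, (_ | ⟨ψ, hψ⟩)⟩ χ hχ
      · exact hχ
      · exact Or.inr hχ
    apply hinc
    refine ⟨BigM, bigModel_serial M0 w0 Mj ag wj hser
      (fun i => ⟨⟨i, none⟩, rfl⟩), Sum.inl (), ?_⟩
    intro φ hφ
    rcases rml_shape (hP.2 φ hφ) with ⟨p, (rfl | rfl)⟩ | ⟨i, χ, rfl⟩ | ⟨i, ψ, rfl⟩
    · exact h0 (Form.atom p) ⟨hφ, p, Or.inl rfl⟩
    · exact h0 (Form.neg (Form.atom p)) ⟨hφ, p, Or.inr rfl⟩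
    · rintro v ⟨j, rfl, rfl⟩
      exact (bigModel_sat M0 w0 Mj ag wj j χ (wj j)).mp
        (hsat j χ (hXsub j hφ))
    · intro h
      have hj : Sat BigM (Sum.inr ⟨(⟨i, some ⟨ψ, hφ⟩⟩ : J), wj ⟨i, some ⟨ψ, hφ⟩⟩⟩)
          (Form.neg ψ) := h _ ⟨⟨i, some ⟨ψ, hφ⟩⟩, rfl, rfl⟩
      exact hj ((bigModel_sat M0 w0 Mj ag wj _ ψ _).mp
        (hsat ⟨i, some ⟨ψ, hφ⟩⟩ ψ (Or.inl rfl)))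
  · rintro (ha | ⟨i, ψ, hmem, hb⟩ | ⟨i, hc⟩) ⟨M, hser, w, hw⟩
    · exact ha ⟨M, hser, w, fun φ hφ => hw φ hφ.1⟩
    · have hd : Sat M w (Form.dia i ψ) := hw _ hmem
      simp only [Form.dia, Sat, not_forall] at hd
      obtain ⟨v, hrv, hv⟩ := hd
      rw [not_not] at hv
      refine hb ⟨M, hser, v, ?_⟩
      rintro φ (rfl | hφ)
      · exact hv
      · exact hw (Form.box i φ) hφ v hrv
    · obtain ⟨v, hrv⟩ := hser i w
      exact hc ⟨M, hser, v, fun φ hφ => hw (Form.box i φ) hφ v hrv⟩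
end

section
/- Let P be a consistent PEKB and ψ an RML. If P ⊨ ψ in KD_n, then there exists φ ∈ P such that φ ⊨ ψ. -/
section Helpers

open Classical

variable {Atom Agt : Type}

lemma entails_refl (φ : Form Atom Agt) : Entails φ φ :=
  fun _ _ _ hw => hw φ rfl

lemma sat_dia (M : Kripke Atom Agt) (w : M.W) (i : Agt) (φ : Form Atom Agt) :
    Sat M w (Form.dia i φ) ↔ ∃ v, M.R i w v ∧ Sat M v φ := by
  simp only [Form.dia, Sat]
  push_neg
  simp [not_not]

lemma entails_box_box {i : Agt} {φ ψ : Form Atom Agt} (h : Entails φ ψ) :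
    Entails (Form.box i φ) (Form.box i ψ) := by
  intro M hser w hw v hv
  have hφ : Sat M w (Form.box i φ) := hw _ rfl
  exact h M hser v (by rintro χ rfl; exact hφ v hv)

lemma entails_box_dia {i : Agt} {φ ψ : Form Atom Agt} (h : Entails φ ψ) :
    Entails (Form.box i φ) (Form.dia i ψ) := by
  intro M hser w hw
  have hφ : Sat M w (Form.box i φ) := hw _ rfl
  obtain ⟨v, hv⟩ := hser i w
  exact (sat_dia M w i ψ).mpr ⟨v, hv, h M hser v (by rintro χ rfl; exact hφ v hv)⟩

lemma entails_dia_dia {i : Agt} {φ ψ : Form Atom Agt} (h : Entails φ ψ) :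
    Entails (Form.dia i φ) (Form.dia i ψ) := by
  intro M hser w hw
  obtain ⟨v, hv, hvφ⟩ := (sat_dia M w i φ).mp (hw _ rfl)
  exact (sat_dia M w i ψ).mpr ⟨v, hv, h M hser v (by rintro χ rfl; exact hvφ)⟩

lemma isRML_of_box {i : Agt} {φ : Form Atom Agt} (h : IsRML (Form.box i φ)) : IsRML φ := by
  cases h with
  | box _ h => exact h

lemma isRML_of_dia {i : Agt} {φ : Form Atom Agt} (h : IsRML (Form.dia i φ)) : IsRML φ := by
  simp only [Form.dia] at h
  cases h with
  | dia _ h => exact h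

lemma finite_Pi {P : Set (Form Atom Agt)} (hP : P.Finite) (i : Agt) :
    {φ : Form Atom Agt | Form.box i φ ∈ P}.Finite := by
  have he : {φ : Form Atom Agt | Form.box i φ ∈ P} = Form.box i ⁻¹' P := rfl
  rw [he]
  exact Set.Finite.preimage (fun a _ b _ hab => by injection hab) hP

lemma not_setEntails {S : Set (Form Atom Agt)} {χ : Form Atom Agt} (h : ¬ SetEntails S χ) :
    ∃ M : Kripke Atom Agt, M.Serial ∧ ∃ w : M.W, (∀ φ ∈ S, Sat M w φ) ∧ ¬ Sat M w χ := by
  simp only [SetEntails] at h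
  push_neg at h
  exact h

/-- Combined Kripke model: a fresh root `none` on top of a disjoint union of models. -/
def combK (ι : Type) (M : ι → Kripke Atom Agt) (V : Atom → Prop)
    (S : Agt → Set ((k : ι) × (M k).W)) : Kripke Atom Agt where
  W := Option ((k : ι) × (M k).W)
  val x p := match x with
    | none => V p
    | some y => (M y.1).val y.2 p
  R i x z := match x with
    | none => ∃ y ∈ S i, z = some y
    | some y => ∃ v, z = some ⟨y.1, v⟩ ∧ (M y.1).R i y.2 v

lemma sat_comb {ι : Type} {M : ι → Kripke Atom Agt} {V : Atom → Prop}
    {S : Agt → Set ((k : ι) × (M k).W)} (φ : Form Atom Agt) (k : ι) (v : (M k).W) :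
    Sat (combK ι M V S) (some ⟨k, v⟩) φ ↔ Sat (M k) v φ := by
  induction φ generalizing v with
  | top => simp [Sat]
  | bot => simp [Sat]
  | atom p => simp [Sat, combK]
  | neg φ ih => simp only [Sat]; rw [ih]
  | and φ ψ ih1 ih2 => simp only [Sat]; rw [ih1, ih2]
  | box i φ ih =>
    simp only [Sat]
    constructor
    · intro hb u hu
      exact (ih u).mp (hb (some ⟨k, u⟩) ⟨u, rfl, hu⟩)
    · rintro hb x ⟨u, rfl, hu⟩
      exact (ih u).mpr (hb u hu)

lemma serial_comb {ι : Type} {M : ι → Kripke Atom Agt} {V : Atom → Prop}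
    {S : Agt → Set ((k : ι) × (M k).W)} (hM : ∀ k, (M k).Serial)
    (hS : ∀ i, (S i).Nonempty) : (combK ι M V S).Serial := by
  intro i w
  match w with
  | none =>
    obtain ⟨y, hy⟩ := hS i
    exact ⟨some y, y, hy, rfl⟩
  | some y =>
    obtain ⟨v, hv⟩ := hM y.1 i y.2
    exact ⟨some ⟨y.1, v⟩, v, rfl, hv⟩

lemma sat_root_box {ι : Type} {M : ι → Kripke Atom Agt} {V : Atom → Prop}
    {S : Agt → Set ((k : ι) × (M k).W)} (i : Agt) (φ : Form Atom Agt) :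
    Sat (combK ι M V S) none (Form.box i φ) ↔ ∀ y ∈ S i, Sat (M y.1) y.2 φ := by
  constructor
  · intro hb y hy
    exact (sat_comb φ y.1 y.2).mp (hb (some y) ⟨y, hy, rfl⟩)
  · rintro hb x ⟨y, hy, rfl⟩
    exact (sat_comb φ y.1 y.2).mpr (hb y hy)

lemma sat_root_dia {ι : Type} {M : ι → Kripke Atom Agt} {V : Atom → Prop}
    {S : Agt → Set ((k : ι) × (M k).W)} (i : Agt) (φ : Form Atom Agt) :
    Sat (combK ι M V S) none (Form.dia i φ) ↔ ∃ y ∈ S i, Sat (M y.1) y.2 φ := by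
  refine (sat_dia (combK ι M V S) none i φ).trans ?_
  constructor
  · rintro ⟨x, ⟨y, hy, rfl⟩, hx⟩
    exact ⟨y, hy, (sat_comb φ y.1 y.2).mp hx⟩
  · rintro ⟨y, hy, hs⟩
    exact ⟨some y, ⟨y, hy, rfl⟩, (sat_comb φ y.1 y.2).mpr hs⟩

lemma sat_root_atom {ι : Type} {M : ι → Kripke Atom Agt} {V : Atom → Prop}
    {S : Agt → Set ((k : ι) × (M k).W)} (p : Atom) :
    Sat (combK ι M V S) none (Form.atom p) ↔ V p := Iff.rfl

end Helpers

/-- If a consistent PEKB `P` entails an RML `ψ` in KD_n, then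
some single element `φ ∈ P` already entails `ψ`. -/
theorem pekb_single_formula_entailment {Atom Agt : Type}
    (P : Set (Form Atom Agt)) (hP : IsPEKB P) (hcons : Consistent P)
    (ψ : Form Atom Agt) (hψ : IsRML ψ) (h : SetEntails P ψ) :
    ∃ φ ∈ P, Entails φ ψ := by
  classical
  induction hψ generalizing P hP hcons with
  | pos p =>
    by_contra hno
    push_neg at hno
    obtain ⟨M0, hser0, w0, hw0⟩ := hcons
    set V : Atom → Prop := fun q => M0.val w0 q ∧ q ≠ p with hV
    set SS : Agt → Set ((_ : Unit) × M0.W) := fun i => {y | M0.R i w0 y.2} with hSS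
    set N := combK Unit (fun _ => M0) V SS with hN
    have hserN : N.Serial := serial_comb (fun _ => hser0) (fun i => by
      obtain ⟨v, hv⟩ := hser0 i w0
      exact ⟨⟨(), v⟩, hv⟩)
    have hmem : ∀ φ ∈ P, Sat N none φ := by
      intro φ hφ
      have hsφ := hw0 φ hφ
      cases hP.2 φ hφ with
      | pos q =>
        refine (sat_root_atom q).mpr ⟨hsφ, ?_⟩
        rintro rfl
        exact hno _ hφ (entails_refl _)
      | neg q =>
        exact fun hc => hsφ ((sat_root_atom q).mp hc).1
      | box i hr =>
        exact (sat_root_box i _).mpr (fun y hy => hsφ y.2 hy)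
      | dia i hr =>
        obtain ⟨v, hv, hvφ⟩ := (sat_dia M0 w0 i _).mp hsφ
        exact (sat_root_dia i _).mpr ⟨⟨(), v⟩, hv, hvφ⟩
    exact ((sat_root_atom p).mp (h N hserN none hmem)).2 rfl
  | neg p =>
    by_contra hno
    push_neg at hno
    obtain ⟨M0, hser0, w0, hw0⟩ := hcons
    set V : Atom → Prop := fun q => M0.val w0 q ∨ q = p with hV
    set SS : Agt → Set ((_ : Unit) × M0.W) := fun i => {y | M0.R i w0 y.2} with hSS
    set N := combK Unit (fun _ => M0) V SS with hN
    have hserN : N.Serial := serial_comb (fun _ => hser0) (fun i => by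
      obtain ⟨v, hv⟩ := hser0 i w0
      exact ⟨⟨(), v⟩, hv⟩)
    have hmem : ∀ φ ∈ P, Sat N none φ := by
      intro φ hφ
      have hsφ := hw0 φ hφ
      cases hP.2 φ hφ with
      | pos q =>
        exact (sat_root_atom q).mpr (Or.inl hsφ)
      | neg q =>
        intro hc
        rcases (sat_root_atom q).mp hc with hq | rfl
        · exact hsφ hq
        · exact hno _ hφ (entails_refl _)
      | box i hr =>
        exact (sat_root_box i _).mpr (fun y hy => hsφ y.2 hy)
      | dia i hr =>
        obtain ⟨v, hv, hvφ⟩ := (sat_dia M0 w0 i _).mp hsφ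
        exact (sat_root_dia i _).mpr ⟨⟨(), v⟩, hv, hvφ⟩
    exact (h N hserN none hmem) ((sat_root_atom p).mpr (Or.inr rfl))
  | @box i χ hχrml ih =>
    obtain ⟨M0, hser0, w0, hw0⟩ := hcons
    set Pi : Set (Form Atom Agt) := {φ | Form.box i φ ∈ P} with hPidef
    have hPEKBi : IsPEKB Pi := ⟨finite_Pi hP.1 i, fun φ hφ => isRML_of_box (hP.2 _ hφ)⟩
    have hconsPi : Consistent Pi := by
      obtain ⟨v, hv⟩ := hser0 i w0
      exact ⟨M0, hser0, v, fun φ hφ => hw0 _ hφ v hv⟩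
    have hent : SetEntails Pi χ := by
      intro M1 hser1 w1 hw1
      set MM : Bool → Kripke Atom Agt := fun b => match b with
        | true => M1
        | false => M0 with hMM
      set SS : Agt → Set ((k : Bool) × (MM k).W) := fun j =>
        {y | (∃ v, y = ⟨false, v⟩ ∧ M0.R j w0 v) ∨ (j = i ∧ y = ⟨true, w1⟩)} with hSS
      set N := combK Bool MM (M0.val w0) SS with hN
      have hserN : N.Serial := serial_comb
        (fun b => by
          match b with
          | false => exact hser0
          | true => exact hser1)
        (fun j => by
          obtain ⟨v, hv⟩ := hser0 j w0
          exact ⟨⟨false, v⟩, Or.inl ⟨v, rfl, hv⟩⟩)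
      have hmem : ∀ φ ∈ P, Sat N none φ := by
        intro φ hφ
        have hsφ := hw0 φ hφ
        cases hP.2 φ hφ with
        | pos q => exact (sat_root_atom q).mpr hsφ
        | neg q => exact fun hc => hsφ ((sat_root_atom q).mp hc)
        | box j hr =>
          refine (sat_root_box j _).mpr ?_
          rintro y (⟨v, rfl, hv⟩ | ⟨rfl, rfl⟩)
          · exact hsφ v hv
          · exact hw1 _ hφ
        | dia j hr =>
          obtain ⟨v, hv, hvφ⟩ := (sat_dia M0 w0 j _).mp hsφ
          exact (sat_root_dia j _).mpr ⟨⟨false, v⟩, Or.inl ⟨v, rfl, hv⟩, hvφ⟩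
      exact (sat_root_box i χ).mp (h N hserN none hmem) ⟨true, w1⟩ (Or.inr ⟨rfl, rfl⟩)
    obtain ⟨φ', hm, he⟩ := ih Pi hPEKBi hconsPi hent
    exact ⟨Form.box i φ', hm, entails_box_box he⟩
  | @dia i χ hχrml ih =>
    by_contra hno
    push_neg at hno
    obtain ⟨M0, hser0, w0, hw0⟩ := hcons
    set Pi : Set (Form Atom Agt) := {φ | Form.box i φ ∈ P} with hPidef
    have hPEKBi : IsPEKB Pi := ⟨finite_Pi hP.1 i, fun φ hφ => isRML_of_box (hP.2 _ hφ)⟩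
    have hconsPi : Consistent Pi := by
      obtain ⟨v, hv⟩ := hser0 i w0
      exact ⟨M0, hser0, v, fun φ hφ => hw0 _ hφ v hv⟩
    by_cases hA : SetEntails Pi χ
    · obtain ⟨φ', hm, he⟩ := ih Pi hPEKBi hconsPi hA
      exact hno _ hm (entails_box_dia he)
    by_cases hB : ∃ φ', Form.dia i φ' ∈ P ∧ SetEntails (insert φ' Pi) χ
    · obtain ⟨φ', hφ'P, hent⟩ := hB
      have hPEKB' : IsPEKB (insert φ' Pi) := by
        refine ⟨hPEKBi.1.insert _, ?_⟩
        rintro φ (rfl | hφ)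
        · exact isRML_of_dia (hP.2 _ hφ'P)
        · exact hPEKBi.2 _ hφ
      have hcons' : Consistent (insert φ' Pi) := by
        obtain ⟨v, hv, hvφ⟩ := (sat_dia M0 w0 i φ').mp (hw0 _ hφ'P)
        refine ⟨M0, hser0, v, ?_⟩
        rintro χ' (rfl | hc)
        · exact hvφ
        · exact hw0 _ hc v hv
      obtain ⟨χ', hm, he⟩ := ih _ hPEKB' hcons' hent
      rcases hm with rfl | hm
      · exact hno _ hφ'P (entails_dia_dia he)
      · exact hno _ hm (entails_box_dia he)
    · push_neg at hB
      obtain ⟨M1, hser1, w1, hw1, hw1χ⟩ := not_setEntails hA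
      choose Mf hserf wf hwf hwfχ using
        fun t : {φ' : Form Atom Agt // Form.dia i φ' ∈ P} => not_setEntails (hB t.1 t.2)
      set MM : Option (Option {φ' : Form Atom Agt // Form.dia i φ' ∈ P}) → Kripke Atom Agt :=
        fun k => match k with
          | none => M0
          | some none => M1
          | some (some t) => Mf t with hMM
      set SS : Agt → Set ((k : Option (Option {φ' : Form Atom Agt // Form.dia i φ' ∈ P})) × (MM k).W) := fun j =>
        {y | (j ≠ i ∧ ∃ v, y = ⟨none, v⟩ ∧ M0.R j w0 v) ∨
             (j = i ∧ (y = ⟨some none, w1⟩ ∨ ∃ t, y = ⟨some (some t), wf t⟩))} with hSS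
      set N := combK _ MM (M0.val w0) SS with hN
      have hserN : N.Serial := serial_comb
        (fun k => by
          match k with
          | none => exact hser0
          | some none => exact hser1
          | some (some t) => exact hserf t)
        (fun j => by
          by_cases hj : j = i
          · exact ⟨⟨some none, w1⟩, Or.inr ⟨hj, Or.inl rfl⟩⟩
          · obtain ⟨v, hv⟩ := hser0 j w0
            exact ⟨⟨none, v⟩, Or.inl ⟨hj, v, rfl, hv⟩⟩)
      have hmem : ∀ φ ∈ P, Sat N none φ := by
        intro φ hφ
        have hsφ := hw0 φ hφ
        cases hP.2 φ hφ with
        | pos q => exact (sat_root_atom q).mpr hsφ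
        | neg q => exact fun hc => hsφ ((sat_root_atom q).mp hc)
        | box j hr =>
          refine (sat_root_box j _).mpr ?_
          rintro y (⟨hne, v, rfl, hv⟩ | ⟨rfl, (rfl | ⟨t, rfl⟩)⟩)
          · exact hsφ v hv
          · exact hw1 _ hφ
          · exact hwf t _ (Or.inr hφ)
        | dia j hr =>
          by_cases hj : j = i
          · subst hj
            exact (sat_root_dia j _).mpr ⟨⟨some (some ⟨_, hφ⟩), wf ⟨_, hφ⟩⟩,
              Or.inr ⟨rfl, Or.inr ⟨⟨_, hφ⟩, rfl⟩⟩, hwf ⟨_, hφ⟩ _ (Or.inl rfl)⟩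
          · obtain ⟨v, hv, hvφ⟩ := (sat_dia M0 w0 j _).mp hsφ
            exact (sat_root_dia j _).mpr ⟨⟨none, v⟩, Or.inl ⟨hj, v, rfl, hv⟩, hvφ⟩
      obtain ⟨y, hy, hyχ⟩ := (sat_root_dia i χ).mp (h N hserN none hmem)
      rcases hy with ⟨hne, -⟩ | ⟨-, (rfl | ⟨t, rfl⟩)⟩
      · exact hne rfl
      · exact hw1χ hyχ
      · exact hwfχ t hyχ
end

section
/- Every consistent PEKB P is logically separable in KD_n: for every consistent finite set P' of RMLs, if P ∪ P' is inconsistent, then there exists φ ∈ P such that {φ} ∪ P' is inconsistent. -/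
namespace SepAux

variable {Atom Agt : Type}

/-- Modal depth of an RML. -/
def depth : Form Atom Agt → ℕ
  | Form.neg φ => depth φ
  | Form.box _ φ => depth φ + 1
  | Form.and φ ψ => max (depth φ) (depth ψ)
  | _ => 0

lemma depth_dia (i : Agt) (φ : Form Atom Agt) :
    depth (Form.dia i φ) = depth φ + 1 := rfl

lemma consistent_mono {S T : Set (Form Atom Agt)} (h : Consistent S) (hsub : T ⊆ S) :
    Consistent T := by
  obtain ⟨M, hs, w, hw⟩ := h
  exact ⟨M, hs, w, fun ψ hψ => hw ψ (hsub hψ)⟩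

lemma not_consistent_pair_lit (p : Atom) :
    ¬ Consistent ({Form.atom p, Form.neg (Form.atom p)} : Set (Form Atom Agt)) := by
  rintro ⟨M, hs, w, hw⟩
  have h1 := hw (Form.atom p) (by simp)
  have h2 := hw (Form.neg (Form.atom p)) (by simp)
  exact h2 h1

lemma consistent_pair_of_box_box {i : Agt} {φ ψ : Form Atom Agt}
    (h : Consistent ({Form.box i φ, Form.box i ψ} : Set (Form Atom Agt))) :
    Consistent ({φ, ψ} : Set (Form Atom Agt)) := by
  obtain ⟨M, hs, w, hw⟩ := h
  obtain ⟨v, hv⟩ := hs i w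
  refine ⟨M, hs, v, ?_⟩
  intro χ hχ
  rcases hχ with rfl | hχ
  · exact hw (Form.box i χ) (by simp) v hv
  · rcases hχ with rfl
    exact hw (Form.box i χ) (by simp) v hv

lemma consistent_pair_of_box_dia {i : Agt} {φ ψ : Form Atom Agt}
    (h : Consistent ({Form.box i φ, Form.dia i ψ} : Set (Form Atom Agt))) :
    Consistent ({φ, ψ} : Set (Form Atom Agt)) := by
  obtain ⟨M, hs, w, hw⟩ := h
  have h1 := hw (Form.box i φ) (by simp)
  have h2 := hw (Form.dia i ψ) (by simp [Form.dia])
  simp only [Form.dia, Sat] at h2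
  push_neg at h2
  obtain ⟨v, hv, hsatψ⟩ := h2
  refine ⟨M, hs, v, ?_⟩
  intro χ hχ
  rcases hχ with rfl | hχ
  · exact h1 v hv
  · rcases hχ with rfl
    exact hsatψ

lemma consistent_of_dia {i : Agt} {δ : Form Atom Agt}
    (h : Consistent ({Form.dia i δ} : Set (Form Atom Agt))) :
    Consistent ({δ} : Set (Form Atom Agt)) := by
  obtain ⟨M, hs, w, hw⟩ := h
  have h2 := hw (Form.dia i δ) (by simp)
  simp only [Form.dia, Sat] at h2
  push_neg at h2
  obtain ⟨v, _, hsat⟩ := h2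
  refine ⟨M, hs, v, ?_⟩
  intro χ hχ
  rcases hχ with rfl
  exact hsat

lemma isrml_box_inv {i : Agt} {φ : Form Atom Agt} (h : IsRML (Form.box i φ)) : IsRML φ := by
  cases h with
  | box _ h => exact h

lemma isrml_dia_inv {i : Agt} {δ : Form Atom Agt}
    (h : IsRML (Form.neg (Form.box i (Form.neg δ)))) : IsRML δ := by
  cases h with
  | dia _ h => exact h

lemma rml_cases {χ : Form Atom Agt} (h : IsRML χ) :
    (∃ p, χ = Form.atom p) ∨ (∃ p, χ = Form.neg (Form.atom p)) ∨
    (∃ i φ, χ = Form.box i φ ∧ IsRML φ) ∨ (∃ i φ, χ = Form.dia i φ ∧ IsRML φ) := by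
  cases h with
  | pos p => exact Or.inl ⟨p, rfl⟩
  | neg p => exact Or.inr (Or.inl ⟨p, rfl⟩)
  | box i h => exact Or.inr (Or.inr (Or.inl ⟨_, _, rfl, h⟩))
  | dia i h => exact Or.inr (Or.inr (Or.inr ⟨_, _, rfl, h⟩))

/-- Disjoint union of a family of Kripke models. -/
def sigmaModel {T : Type} (M : T → Kripke Atom Agt) : Kripke Atom Agt where
  W := Σ t : T, (M t).W
  val := fun x => (M x.1).val x.2
  R := fun i x y => ∃ t u v, x = ⟨t, u⟩ ∧ y = ⟨t, v⟩ ∧ (M t).R i u v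

lemma sigmaModel_serial {T : Type} (M : T → Kripke Atom Agt)
    (h : ∀ t, (M t).Serial) : (sigmaModel M).Serial := by
  rintro i ⟨t, u⟩
  obtain ⟨v, hv⟩ := h t i u
  exact ⟨⟨t, v⟩, t, u, v, rfl, rfl, hv⟩

lemma sat_sigma {T : Type} (M : T → Kripke Atom Agt) (φ : Form Atom Agt) :
    ∀ (t : T) (u : (M t).W), Sat (sigmaModel M) ⟨t, u⟩ φ ↔ Sat (M t) u φ := by
  induction φ with
  | top => intro t u; simp [Sat]
  | bot => intro t u; simp [Sat]
  | atom p => intro t u; simp [Sat, sigmaModel]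
  | neg φ ih => intro t u; simp only [Sat]; rw [ih]
  | and φ ψ ih1 ih2 => intro t u; simp only [Sat]; rw [ih1, ih2]
  | box i φ ih =>
    intro t u
    simp only [Sat]
    constructor
    · intro h v hv
      exact (ih t v).mp (h ⟨t, v⟩ ⟨t, u, v, rfl, rfl, hv⟩)
    · intro h y hy
      obtain ⟨t', u', v', h1, rfl, hR⟩ := hy
      injection h1 with ht hu
      subst ht
      have hu' := eq_of_heq hu
      subst hu'
      exact (ih _ v').mpr (h v' hR)

/-- Add a fresh root world below a model, with given valuation and
selected successors for each agent. -/
def addRoot (M : Kripke Atom Agt) (val₀ : Atom → Prop) (sel : Agt → M.W → Prop) :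
    Kripke Atom Agt where
  W := Option M.W
  val := fun x => match x with | none => val₀ | some u => M.val u
  R := fun i x y => match x, y with
    | none, some v => sel i v
    | some u, some v => M.R i u v
    | _, _ => False

lemma addRoot_serial (M : Kripke Atom Agt) (val₀ : Atom → Prop) (sel : Agt → M.W → Prop)
    (hM : M.Serial) (hsel : ∀ i, ∃ v, sel i v) : (addRoot M val₀ sel).Serial := by
  intro i x
  cases x with
  | none => obtain ⟨v, hv⟩ := hsel i; exact ⟨some v, hv⟩
  | some u => obtain ⟨v, hv⟩ := hM i u; exact ⟨some v, hv⟩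

lemma sat_addRoot (M : Kripke Atom Agt) (val₀ : Atom → Prop) (sel : Agt → M.W → Prop)
    (φ : Form Atom Agt) : ∀ u : M.W, Sat (addRoot M val₀ sel) (some u) φ ↔ Sat M u φ := by
  induction φ with
  | top => intro u; simp [Sat]
  | bot => intro u; simp [Sat]
  | atom p => intro u; simp [Sat, addRoot]
  | neg φ ih => intro u; simp only [Sat]; rw [ih]
  | and φ ψ ih1 ih2 => intro u; simp only [Sat]; rw [ih1, ih2]
  | box i φ ih =>
    intro u
    simp only [Sat]
    constructor
    · intro h v hv
      exact (ih v).mp (h (some v) hv)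
    · intro h y hy
      cases y with
      | none => exact absurd hy (by simp [addRoot])
      | some v =>
        have hv : M.R i u v := hy
        exact (ih v).mpr (h v hv)

open Classical in
/-- Extract the arguments of `box i` formulas from a list. -/
noncomputable def boxProj (i : Agt) : Form Atom Agt → Option (Form Atom Agt) :=
  fun χ => match χ with
  | Form.box j φ => if j = i then some φ else none
  | _ => none

lemma boxProj_eq_some {i : Agt} {χ φ : Form Atom Agt} :
    boxProj i χ = some φ ↔ χ = Form.box i φ := by
  cases χ <;> simp only [boxProj] <;> try simp


/-- Extract the `(agent, argument)` pairs of diamond formulas from a list. -/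
def diaProj : Form Atom Agt → Option (Agt × Form Atom Agt) :=
  fun χ => match χ with
  | Form.neg (Form.box i (Form.neg δ)) => some (i, δ)
  | _ => none

lemma diaProj_eq_some {χ : Form Atom Agt} {i : Agt} {δ : Form Atom Agt} :
    diaProj χ = some (i, δ) ↔ χ = Form.dia i δ := by
  cases χ with
  | neg ψ =>
    cases ψ with
    | box j θ =>
      cases θ with
      | neg δ' => simp [diaProj, Form.dia, and_comm]
      | _ => simp [diaProj, Form.dia]
    | _ => simp [diaProj, Form.dia]
  | _ => simp [diaProj, Form.dia]

/-- Key lemma: a pairwise consistent finite set of RMLs is consistent. -/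
lemma consistent_of_pairwise : ∀ (n : ℕ) (L : List (Form Atom Agt)),
    (∀ φ ∈ L, IsRML φ) → (∀ φ ∈ L, depth φ < n) →
    (∀ φ ∈ L, ∀ ψ ∈ L, Consistent ({φ, ψ} : Set (Form Atom Agt))) →
    Consistent {φ | φ ∈ L} := by
  intro n
  induction n with
  | zero =>
    intro L _ hd _
    exact ⟨⟨Unit, fun _ _ => True, fun _ _ _ => True⟩, fun _ _ => ⟨(), trivial⟩, (),
      fun ψ hψ => absurd (hd ψ hψ) (Nat.not_lt_zero _)⟩
  | succ n ih =>
    intro L hrml hd hpair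
    classical
    set BL : Agt → List (Form Atom Agt) := fun i => L.filterMap (boxProj i) with hBLdef
    have hBL : ∀ i φ, φ ∈ BL i ↔ Form.box i φ ∈ L := by
      intro i φ
      simp only [hBLdef, List.mem_filterMap]
      constructor
      · rintro ⟨χ, hχ, hproj⟩
        rwa [boxProj_eq_some.mp hproj] at hχ
      · intro hmem
        exact ⟨Form.box i φ, hmem, boxProj_eq_some.mpr rfl⟩
    set DL : List (Agt × Form Atom Agt) := L.filterMap diaProj with hDLdef
    have hDL : ∀ i δ, (i, δ) ∈ DL ↔ Form.dia i δ ∈ L := by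
      intro i δ
      simp only [hDLdef, List.mem_filterMap]
      constructor
      · rintro ⟨χ, hχ, hproj⟩
        rwa [diaProj_eq_some.mp hproj] at hχ
      · intro hmem
        exact ⟨Form.dia i δ, hmem, diaProj_eq_some.mpr rfl⟩
    -- index type for successor submodels
    let T : Type := Agt ⊕ {x : Agt × Form Atom Agt // x ∈ DL}
    let ag : T → Agt := Sum.elim id (fun x => x.1.1)
    let S : T → List (Form Atom Agt) := Sum.elim (fun i => BL i) (fun x => x.1.2 :: BL x.1.1)
    have hBLsub : ∀ t : T, ∀ χ, χ ∈ BL (ag t) → χ ∈ S t := by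
      rintro (i | x) χ hχ
      · exact hχ
      · exact List.mem_cons_of_mem _ hχ
    -- pairwise facts
    have hboxpair : ∀ (i : Agt) (φ ψ : Form Atom Agt), φ ∈ BL i → ψ ∈ BL i →
        Consistent ({φ, ψ} : Set (Form Atom Agt)) := by
      intro i φ ψ hφ hψ
      exact consistent_pair_of_box_box
        (hpair _ ((hBL i φ).mp hφ) _ ((hBL i ψ).mp hψ))
    have hboxdia : ∀ (i : Agt) (φ δ : Form Atom Agt), φ ∈ BL i → Form.dia i δ ∈ L →
        Consistent ({φ, δ} : Set (Form Atom Agt)) := by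
      intro i φ δ hφ hδ
      exact consistent_pair_of_box_dia (hpair _ ((hBL i φ).mp hφ) _ hδ)
    have hconsS : ∀ t : T, Consistent {φ | φ ∈ S t} := by
      intro t
      apply ih (S t)
      · rintro φ hφ
        rcases t with i | ⟨⟨i, δ⟩, hx⟩
        · exact isrml_box_inv (hrml _ ((hBL i φ).mp hφ))
        · rcases List.mem_cons.mp hφ with rfl | hφ'
          · exact isrml_dia_inv (hrml _ ((hDL i φ).mp hx))
          · exact isrml_box_inv (hrml _ ((hBL i φ).mp hφ'))
      · rintro φ hφ
        rcases t with i | ⟨⟨i, δ⟩, hx⟩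
        · have := hd _ ((hBL i φ).mp hφ)
          simpa [depth] using Nat.lt_of_succ_lt_succ this
        · rcases List.mem_cons.mp hφ with rfl | hφ'
          · have := hd _ ((hDL i φ).mp hx)
            rw [depth_dia] at this
            exact Nat.lt_of_succ_lt_succ this
          · have := hd _ ((hBL i φ).mp hφ')
            simpa [depth] using Nat.lt_of_succ_lt_succ this
      · rintro φ hφ ψ hψ
        rcases t with i | ⟨⟨i, δ⟩, hx⟩
        · exact hboxpair i φ ψ hφ hψ
        · have hdmem : Form.dia i δ ∈ L := (hDL i δ).mp hx
          rcases List.mem_cons.mp hφ with rfl | hφ' <;>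
            rcases List.mem_cons.mp hψ with h2 | hψ'
          · rcases h2 with rfl
            rw [Set.pair_eq_singleton]
            refine consistent_of_dia (i := i) ?_
            have := hpair _ hdmem _ hdmem
            rwa [Set.pair_eq_singleton] at this
          · rw [Set.pair_comm]
            exact hboxdia i ψ φ hψ' hdmem
          · rcases h2 with rfl
            exact hboxdia i φ ψ hφ' hdmem
          · exact hboxpair i φ ψ hφ' hψ'
    have hconsS' : ∀ t : T, ∃ M : Kripke Atom Agt, M.Serial ∧
        ∃ w : M.W, ∀ ψ ∈ {φ | φ ∈ S t}, Sat M w ψ := hconsS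
    choose M hM using hconsS'
    have hser : ∀ t, (M t).Serial := fun t => (hM t).1
    have hw' : ∀ t : T, ∃ w : (M t).W, ∀ ψ ∈ {φ | φ ∈ S t}, Sat (M t) w ψ :=
      fun t => (hM t).2
    choose w hw using hw'
    let MS := sigmaModel M
    let sel : Agt → MS.W → Prop := fun i x => ag x.1 = i ∧ x = ⟨x.1, w x.1⟩
    let val₀ : Atom → Prop := fun p => Form.atom p ∈ L
    refine ⟨addRoot MS val₀ sel, ?_, none, ?_⟩
    · apply addRoot_serial
      · exact sigmaModel_serial M hser
      · intro i
        exact ⟨⟨Sum.inl i, w (Sum.inl i)⟩, rfl, rfl⟩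
    · intro ψ hψ
      have hψL : ψ ∈ L := hψ
      rcases rml_cases (hrml ψ hψL) with ⟨p, rfl⟩ | ⟨p, rfl⟩ | ⟨i, φ, rfl, _⟩ | ⟨i, φ, rfl, _⟩
      · exact hψL
      · intro hcontra
        have hmem : Form.atom p ∈ L := hcontra
        exact not_consistent_pair_lit p (hpair _ hmem _ hψL)
      · -- box case
        intro y hy
        cases y with
        | none => exact absurd hy (by simp [addRoot])
        | some x =>
          obtain ⟨ha, hx⟩ := (hy : sel i x)
          rw [hx]
          refine (sat_addRoot MS val₀ sel φ _).mpr ((sat_sigma M φ _ _).mpr ?_)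
          apply hw x.1 φ
          apply hBLsub
          rw [ha]
          exact (hBL i φ).mpr hψL
      · -- dia case
        have hmem : (i, φ) ∈ DL := (hDL i φ).mpr hψL
        simp only [Form.dia, Sat]
        intro hcontra
        apply hcontra (some ⟨Sum.inr ⟨(i, φ), hmem⟩, w (Sum.inr ⟨(i, φ), hmem⟩)⟩)
          ⟨rfl, rfl⟩
        refine (sat_addRoot MS val₀ sel φ _).mpr ((sat_sigma M φ _ _).mpr ?_)
        exact hw _ φ List.mem_cons_self

end SepAux

/-- Every consistent PEKB is logically separable in KD_n: for
every consistent finite set `P'` of RMLs, if `P ∪ P'` is inconsistent, then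
some `φ ∈ P` is such that `{φ} ∪ P'` is inconsistent. -/
theorem pekb_logically_separable {Atom Agt : Type}
    (P : Set (Form Atom Agt)) (hP : IsPEKB P) (hcons : Consistent P)
    (P' : Set (Form Atom Agt)) (hP' : IsPEKB P') (hP'cons : Consistent P')
    (h : ¬ Consistent (P ∪ P')) :
    ∃ φ ∈ P, ¬ Consistent ({φ} ∪ P') := by
  by_contra hcon
  push_neg at hcon
  apply h
  have hfin : (P ∪ P').Finite := hP.1.union hP'.1
  classical
  set L := hfin.toFinset.toList with hLdef
  have hmemL : ∀ φ, φ ∈ L ↔ φ ∈ P ∪ P' := by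
    intro φ
    rw [hLdef, Finset.mem_toList, Set.Finite.mem_toFinset]
  have hLset : {φ | φ ∈ L} = P ∪ P' := Set.ext fun φ => hmemL φ
  rw [← hLset]
  apply SepAux.consistent_of_pairwise ((L.map SepAux.depth).sum + 1) L
  · intro φ hφ
    rcases (hmemL φ).mp hφ with hφ' | hφ'
    · exact hP.2 φ hφ'
    · exact hP'.2 φ hφ'
  · intro φ hφ
    have : SepAux.depth φ ≤ (L.map SepAux.depth).sum :=
      List.single_le_sum (fun _ _ => Nat.zero_le _) _ (List.mem_map_of_mem hφ)
    omega
  · intro φ hφ ψ hψ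
    rcases (hmemL φ).mp hφ with hφ' | hφ' <;> rcases (hmemL ψ).mp hψ with hψ' | hψ'
    · exact SepAux.consistent_mono hcons (by
        intro χ hχ; rcases hχ with rfl | hχ
        · exact hφ'
        · rcases hχ with rfl; exact hψ')
    · exact SepAux.consistent_mono (hcon φ hφ') (by
        intro χ hχ; rcases hχ with rfl | hχ
        · exact Or.inl rfl
        · rcases hχ with rfl; exact Or.inr hψ')
    · rw [Set.pair_comm]
      exact SepAux.consistent_mono (hcon ψ hψ') (by
        intro χ hχ; rcases hχ with rfl | hχ
        · exact Or.inl rfl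
        · rcases hχ with rfl; exact Or.inr hφ')
    · exact SepAux.consistent_mono hP'cons (by
        intro χ hχ; rcases hχ with rfl | hχ
        · exact hφ'
        · rcases hχ with rfl; exact hψ')
end

section
/- Let P be a consistent PEKB. Then Cl(P) = {φ : φ is an RML and P ⊨ φ in KD_n}; that is, the closure operator Cl is sound and complete for RML consequences of a consistent PEKB in KD_n. -/
/-- `InCl φ ψ`: `ψ ∈ Cl(φ)`, i.e. `ψ` is obtained from the RML `φ` by replacing
`B_i` by `◇_i` (with the same agent index) at any subset of the modal positions. -/
inductive InCl {Atom Agt : Type} : Form Atom Agt → Form Atom Agt → Prop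
  | pos (p : Atom) : InCl (Form.atom p) (Form.atom p)
  | neg (p : Atom) : InCl (Form.neg (Form.atom p)) (Form.neg (Form.atom p))
  | boxBox (i : Agt) {φ χ : Form Atom Agt} : InCl φ χ → InCl (Form.box i φ) (Form.box i χ)
  | boxDia (i : Agt) {φ χ : Form Atom Agt} : InCl φ χ → InCl (Form.box i φ) (Form.dia i χ)
  | diaDia (i : Agt) {φ χ : Form Atom Agt} : InCl φ χ → InCl (Form.dia i φ) (Form.dia i χ)

/-- `Cl` of a set of RMLs: the union of the `Cl` of its elements. -/
def ClSet {Atom Agt : Type} (S : Set (Form Atom Agt)) : Set (Form Atom Agt) :=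
  {ψ | ∃ φ ∈ S, InCl φ ψ}



section ClAux
variable {Atom Agt : Type}

lemma incl_isRML {φ ψ : Form Atom Agt} (h : InCl φ ψ) : IsRML ψ := by
  induction h with
  | pos p => exact IsRML.pos p
  | neg p => exact IsRML.neg p
  | boxBox i _ ih => exact IsRML.box i ih
  | boxDia i _ ih => exact IsRML.dia i ih
  | diaDia i _ ih => exact IsRML.dia i ih

lemma sat_dia_iff {M : Kripke Atom Agt} {w : M.W} {i : Agt} {φ : Form Atom Agt} :
    Sat M w (Form.dia i φ) ↔ ∃ v, M.R i w v ∧ Sat M v φ := by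
  simp only [Form.dia, Sat]
  push_neg
  rfl

lemma incl_entails {φ ψ : Form Atom Agt} (h : InCl φ ψ) :
    ∀ (M : Kripke Atom Agt), M.Serial → ∀ w : M.W, Sat M w φ → Sat M w ψ := by
  induction h with
  | pos p => intro M _ w hw; exact hw
  | neg p => intro M _ w hw; exact hw
  | boxBox i _ ih =>
      intro M hM w hw v hv
      exact ih M hM v (hw v hv)
  | boxDia i _ ih =>
      intro M hM w hw
      obtain ⟨v, hv⟩ := hM i w
      exact sat_dia_iff.mpr ⟨v, hv, ih M hM v (hw v hv)⟩
  | diaDia i _ ih =>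
      intro M hM w hw
      obtain ⟨v, hv, hsat⟩ := sat_dia_iff.mp hw
      exact sat_dia_iff.mpr ⟨v, hv, ih M hM v hsat⟩

/-- Box-stripping of a set of formulae. -/
def stripB (i : Agt) (Q : Set (Form Atom Agt)) : Set (Form Atom Agt) :=
  {ψ | Form.box i ψ ∈ Q}

lemma consistent_not_both {Q : Set (Form Atom Agt)} (h : Consistent Q) {p : Atom}
    (hp : Form.atom p ∈ Q) (hn : Form.neg (Form.atom p) ∈ Q) : False := by
  obtain ⟨M, _, w, hw⟩ := h
  exact hw _ hn (hw _ hp)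

lemma consistent_stripB {Q : Set (Form Atom Agt)} (h : Consistent Q) (i : Agt) :
    Consistent (stripB i Q) := by
  obtain ⟨M, hM, w, hw⟩ := h
  obtain ⟨v, hv⟩ := hM i w
  exact ⟨M, hM, v, fun ψ hψ => hw _ hψ v hv⟩

lemma consistent_insert_stripB {Q : Set (Form Atom Agt)} (h : Consistent Q) {i : Agt}
    {ψ : Form Atom Agt} (hd : Form.dia i ψ ∈ Q) : Consistent (insert ψ (stripB i Q)) := by
  obtain ⟨M, hM, w, hw⟩ := h
  obtain ⟨v, hv, hs⟩ := sat_dia_iff.mp (hw _ hd)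
  refine ⟨M, hM, v, fun χ hχ => ?_⟩
  rcases hχ with rfl | hχ
  · exact hs
  · exact hw _ hχ v hv

/-- The canonical model, parametrized by a sign choosing the default valuation. -/
def UModel (Atom Agt : Type) (s : Bool) : Kripke Atom Agt where
  W := {Q : Set (Form Atom Agt) // Consistent Q}
  val := fun Q p =>
    match s with
    | true => Form.atom p ∈ Q.1
    | false => Form.neg (Form.atom p) ∉ Q.1
  R := fun i Q Q' => Q'.1 = stripB i Q.1 ∨
      ∃ ψ, Form.dia i ψ ∈ Q.1 ∧ Q'.1 = insert ψ (stripB i Q.1)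

lemma UModel.serial (s : Bool) : (UModel Atom Agt s).Serial := by
  intro i Q
  exact ⟨⟨stripB i Q.1, consistent_stripB Q.2 i⟩, Or.inl rfl⟩

lemma truth_lemma (s : Bool) {ψ : Form Atom Agt} (h : IsRML ψ) :
    ∀ Q : (UModel Atom Agt s).W, ψ ∈ Q.1 → Sat (UModel Atom Agt s) Q ψ := by
  induction h with
  | pos p =>
      intro Q hQ
      cases s with
      | true => exact hQ
      | false => exact fun hn => consistent_not_both Q.2 hQ hn
  | neg p =>
      intro Q hQ
      cases s with
      | true => exact fun hp => consistent_not_both Q.2 hp hQ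
      | false => exact fun hp => hp hQ
  | @box i φ _ ih =>
      intro Q hQ v hv
      rcases hv with hv | ⟨χ, _, hv⟩
      · exact ih v (by rw [hv]; exact hQ)
      · exact ih v (by rw [hv]; exact Set.mem_insert_of_mem _ hQ)
  | @dia i φ hφ ih =>
      intro Q hQ
      refine sat_dia_iff.mpr ⟨⟨insert φ (stripB i Q.1), consistent_insert_stripB Q.2 hQ⟩,
        Or.inr ⟨φ, hQ, rfl⟩, ih _ (Set.mem_insert _ _)⟩

/-- The sign of the leaf literal of an RML. -/
def posLeaf : Form Atom Agt → Bool
  | Form.box _ φ => posLeaf φ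
  | Form.neg (Form.box _ (Form.neg φ)) => posLeaf φ
  | Form.neg _ => false
  | _ => true

@[simp] lemma posLeaf_atom (p : Atom) : posLeaf (Form.atom p : Form Atom Agt) = true := rfl
@[simp] lemma posLeaf_neg_atom (p : Atom) :
    posLeaf (Form.neg (Form.atom p) : Form Atom Agt) = false := rfl
@[simp] lemma posLeaf_box (i : Agt) (φ : Form Atom Agt) :
    posLeaf (Form.box i φ) = posLeaf φ := rfl
@[simp] lemma posLeaf_dia (i : Agt) (φ : Form Atom Agt) :
    posLeaf (Form.dia i φ) = posLeaf φ := rfl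

lemma falsity_lemma (s : Bool) {φ : Form Atom Agt} (h : IsRML φ) (hs : posLeaf φ = s) :
    ∀ Q : (UModel Atom Agt s).W, (∀ σ ∈ Q.1, ¬ InCl σ φ) →
      ¬ Sat (UModel Atom Agt s) Q φ := by
  induction h with
  | pos p =>
      intro Q hQ hsat
      subst hs
      exact hQ _ hsat (InCl.pos p)
  | neg p =>
      intro Q hQ hsat
      subst hs
      exact hQ _ (not_not.mp hsat) (InCl.neg p)
  | @box i φ hφ ih =>
      intro Q hQ hsat
      have hs' : posLeaf φ = s := by rw [← hs]; rfl
      refine ih hs' ⟨stripB i Q.1, consistent_stripB Q.2 i⟩ ?_ (hsat _ (Or.inl rfl))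
      intro σ hσ hin
      exact hQ _ hσ (InCl.boxBox i hin)
  | @dia i φ hφ ih =>
      intro Q hQ hsat
      have hs' : posLeaf φ = s := by rw [← hs]; rfl
      apply hsat
      intro v hv
      rcases hv with hv | ⟨ψ, hψ, hv⟩
      · refine ih hs' v ?_
        intro σ hσ hin
        rw [hv] at hσ
        exact hQ _ hσ (InCl.boxDia i hin)
      · refine ih hs' v ?_
        intro σ hσ hin
        rw [hv] at hσ
        rcases hσ with rfl | hσ
        · exact hQ _ hψ (InCl.diaDia i hin)
        · exact hQ _ hσ (InCl.boxDia i hin)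

end ClAux

/-- For a consistent PEKB `P`, `Cl(P)` is exactly the set of RML
consequences of `P` in KD_n (soundness and completeness of the closure). -/
theorem cl_sound_and_complete {Atom Agt : Type}
    (P : Set (Form Atom Agt)) (hP : IsPEKB P) (hcons : Consistent P) :
    ClSet P = {φ : Form Atom Agt | IsRML φ ∧ SetEntails P φ} := by
  ext φ
  constructor
  · rintro ⟨χ, hχP, hin⟩
    exact ⟨incl_isRML hin, fun M hM w hw => incl_entails hin M hM w (hw χ hχP)⟩
  · rintro ⟨hrml, hent⟩
    by_contra hncl
    have hfal := falsity_lemma (posLeaf φ) hrml rfl ⟨P, hcons⟩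
      (fun σ hσ hin => hncl ⟨σ, hσ, hin⟩)
    exact hfal (hent (UModel Atom Agt (posLeaf φ)) (UModel.serial _) ⟨P, hcons⟩
      (fun ψ hψ => truth_lemma _ (hP.2 ψ hψ) _ hψ))
end

section
/- For all RMLs φ and ψ, φ ⊨ ψ in KD_n if and only if ψ ∈ Cl(φ); equivalently, the RMLs entailed by a single RML φ are exactly those obtained from φ by replacing the modal operator B_i at some (possibly empty) set of positions of φ by ◇_i with the same agent index. -/
section Helpers
open Classical
variable {Atom Agt : Type}

lemma entails_iff {φ ψ : Form Atom Agt} :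
    Entails φ ψ ↔ ∀ M : Kripke Atom Agt, M.Serial → ∀ w, Sat M w φ → Sat M w ψ := by
  constructor
  · intro h M hs w hφ
    exact h M hs w (fun χ hχ => hχ ▸ hφ)
  · intro h M hs w hall
    exact h M hs w (hall φ rfl)

/-- strip modalities to get the literal of an RML -/
def litOf : Form Atom Agt → Form Atom Agt
  | Form.box _ χ => litOf χ
  | Form.neg (Form.box _ (Form.neg χ)) => litOf χ
  | χ => χ

@[simp] lemma litOf_atom (p : Atom) : litOf (Form.atom p : Form Atom Agt) = Form.atom p := rfl
@[simp] lemma litOf_negatom (p : Atom) :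
    litOf (Form.neg (Form.atom p) : Form Atom Agt) = Form.neg (Form.atom p) := rfl
@[simp] lemma litOf_box (i : Agt) (χ : Form Atom Agt) : litOf (Form.box i χ) = litOf χ := rfl
@[simp] lemma litOf_dia (i : Agt) (χ : Form Atom Agt) : litOf (Form.dia i χ) = litOf χ := rfl

lemma litOf_lit {χ : Form Atom Agt} (h : IsRML χ) :
    (∃ p, litOf χ = Form.atom p) ∨ (∃ p, litOf χ = Form.neg (Form.atom p)) := by
  induction h with
  | pos p => exact Or.inl ⟨p, rfl⟩
  | neg p => exact Or.inr ⟨p, rfl⟩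
  | box i _ ih => simpa using ih
  | dia i _ ih => simpa using ih

end Helpers
section Models
open Classical
variable {Atom Agt : Type}

/-- Branch model: a root `none` and two self-looping leaves `some true`, `some false`.
Agent `i` reaches from the root exactly the leaves `b` with `S i b`. -/
def BM (S : Agt → Bool → Prop) (Vr Vv Vu : Atom → Prop) : Kripke Atom Agt where
  W := Option Bool
  val := fun w p => match w with
    | none => Vr p
    | some true => Vv p
    | some false => Vu p
  R := fun i w x => match w with
    | none => ∃ b, x = some b ∧ S i b
    | some b => x = some b

lemma BM_serial {S : Agt → Bool → Prop} {Vr Vv Vu : Atom → Prop} (hS : ∀ i, ∃ b, S i b) :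
    (BM S Vr Vv Vu : Kripke Atom Agt).Serial := by
  intro i w
  match w with
  | none => obtain ⟨b, hb⟩ := hS i; exact ⟨some b, ⟨b, rfl, hb⟩⟩
  | some b => exact ⟨some b, rfl⟩

lemma BM_leaf_sat {S : Agt → Bool → Prop} {Vr Vv Vu : Atom → Prop} {χ : Form Atom Agt}
    (h : IsRML χ) (b : Bool) :
    Sat (BM S Vr Vv Vu) (some b) χ ↔ Sat (BM S Vr Vv Vu) (some b) (litOf χ) := by
  induction h with
  | pos p => simp
  | neg p => simp
  | box i hχ ih =>
      rw [litOf_box, ← ih]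
      constructor
      · intro H; exact H (some b) rfl
      · intro H x hx
        have hx' : x = some b := hx
        rw [hx']; exact H
  | dia i hχ ih =>
      rw [litOf_dia, ← ih]
      show (¬ ∀ x, _ → ¬ Sat _ x _) ↔ _
      constructor
      · intro H
        by_contra hb
        exact H (fun x hx => by have hx' : x = some b := hx; rw [hx']; exact hb)
      · intro H hall
        exact hall (some b) rfl H

lemma BM_leaf_true {S : Agt → Bool → Prop} {Vr Vu : Atom → Prop} {χ : Form Atom Agt}
    (h : IsRML χ) :
    Sat (BM S Vr (fun q => litOf χ = Form.atom q) Vu) (some true) χ := by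
  rw [BM_leaf_sat h]
  rcases litOf_lit h with ⟨p, hp⟩ | ⟨p, hp⟩ <;> rw [hp]
  · show (Form.atom p : Form Atom Agt) = Form.atom p
    rfl
  · show ¬ ((Form.neg (Form.atom p) : Form Atom Agt) = Form.atom p)
    simp

lemma BM_leaf_false {S : Agt → Bool → Prop} {Vr Vv : Atom → Prop} {χ : Form Atom Agt}
    (h : IsRML χ) :
    ¬ Sat (BM S Vr Vv (fun q => litOf χ = Form.neg (Form.atom q))) (some false) χ := by
  rw [BM_leaf_sat h]
  rcases litOf_lit h with ⟨p, hp⟩ | ⟨p, hp⟩ <;> rw [hp]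
  · show ¬ ((Form.atom p : Form Atom Agt) = Form.neg (Form.atom p))
    simp
  · show ¬ ¬ ((Form.neg (Form.atom p) : Form Atom Agt) = Form.neg (Form.atom p))
    simp

end Models
section AddRoot
open Classical
variable {Atom Agt : Type}

/-- Add a fresh root below `w'`, whose unique successor (for every agent) is `w'`. -/
def addRoot (M : Kripke Atom Agt) (w' : M.W) : Kripke Atom Agt where
  W := Option M.W
  val := fun w p => match w with
    | none => False
    | some v => M.val v p
  R := fun i a b => match a with
    | none => b = some w'
    | some v => ∃ u, b = some u ∧ M.R i v u

lemma addRoot_serial {M : Kripke Atom Agt} {w' : M.W} (hM : M.Serial) :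
    (addRoot M w').Serial := by
  intro i w
  match w with
  | none => exact ⟨some w', rfl⟩
  | some v => obtain ⟨u, hu⟩ := hM i v; exact ⟨some u, ⟨u, rfl, hu⟩⟩

lemma addRoot_sat {M : Kripke Atom Agt} {w' : M.W} :
    ∀ (χ : Form Atom Agt) (w : M.W), Sat (addRoot M w') (some w) χ ↔ Sat M w χ := by
  intro χ
  induction χ with
  | top => intro w; simp [Sat]
  | bot => intro w; simp [Sat]
  | atom p => intro w; exact Iff.rfl
  | neg χ ih => intro w; exact not_congr (ih w)
  | and χ₁ χ₂ ih₁ ih₂ => intro w; exact and_congr (ih₁ w) (ih₂ w)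
  | box i χ ih =>
      intro w
      constructor
      · intro H v hv
        exact (ih v).1 (H (some v) ⟨v, rfl, hv⟩)
      · intro H x hx
        obtain ⟨u, rfl, hu⟩ := hx
        exact (ih u).2 (H u hu)

lemma box_step {i : Agt} {φ' ψ' : Form Atom Agt}
    (h : Entails (Form.box i φ') (Form.box i ψ')) : Entails φ' ψ' := by
  rw [entails_iff] at h ⊢
  intro M hs w hφ
  have hroot : Sat (addRoot M w) none (Form.box i φ') := by
    intro x hx
    have hx' : x = some w := hx
    rw [hx']
    exact (addRoot_sat φ' w).2 hφ
  have := h (addRoot M w) (addRoot_serial hs) none hroot (some w) rfl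
  exact (addRoot_sat ψ' w).1 this

lemma box_dia_step {i j : Agt} {φ' ψ' : Form Atom Agt}
    (h : Entails (Form.box i φ') (Form.dia j ψ')) : Entails φ' ψ' := by
  rw [entails_iff] at h ⊢
  intro M hs w hφ
  have hroot : Sat (addRoot M w) none (Form.box i φ') := by
    intro x hx
    have hx' : x = some w := hx
    rw [hx']
    exact (addRoot_sat φ' w).2 hφ
  have H := h (addRoot M w) (addRoot_serial hs) none hroot
  have H' : ¬ ∀ x, (addRoot M w).R j none x → ¬ Sat (addRoot M w) x ψ' := H
  by_contra hc
  exact H' (fun x hx => by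
    have hx' : x = some w := hx
    rw [hx']
    exact fun hs' => hc ((addRoot_sat ψ' w).1 hs'))

lemma dia_dia_step {i j : Agt} {φ' ψ' : Form Atom Agt}
    (h : Entails (Form.dia i φ') (Form.dia j ψ')) : Entails φ' ψ' := by
  rw [entails_iff] at h ⊢
  intro M hs w hφ
  have hroot : Sat (addRoot M w) none (Form.dia i φ') := by
    intro hall
    exact hall (some w) rfl ((addRoot_sat φ' w).2 hφ)
  have H := h (addRoot M w) (addRoot_serial hs) none hroot
  have H' : ¬ ∀ x, (addRoot M w).R j none x → ¬ Sat (addRoot M w) x ψ' := H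
  by_contra hc
  exact H' (fun x hx => by
    have hx' : x = some w := hx
    rw [hx']
    exact fun hs' => hc ((addRoot_sat ψ' w).1 hs'))

end AddRoot
section Soundness
open Classical
variable {Atom Agt : Type}

lemma inCl_entails {φ ψ : Form Atom Agt} (h : InCl φ ψ) : Entails φ ψ := by
  induction h with
  | pos p => exact entails_iff.2 (fun M _ w hw => hw)
  | neg p => exact entails_iff.2 (fun M _ w hw => hw)
  | boxBox i h ih =>
      refine entails_iff.2 (fun M hs w hw => ?_)
      intro v hv
      exact entails_iff.1 ih M hs v (hw v hv)
  | boxDia i h ih =>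
      refine entails_iff.2 (fun M hs w hw => ?_)
      intro hall
      obtain ⟨v, hv⟩ := hs i w
      exact hall v hv (entails_iff.1 ih M hs v (hw v hv))
  | diaDia i h ih =>
      refine entails_iff.2 (fun M hs w hw => ?_)
      intro hall
      have hw' : ¬ ∀ v, M.R i w v → ¬ Sat M v _ := hw
      exact hw' (fun v hv hsat => hall v hv (entails_iff.1 ih M hs v hsat))

end Soundness
section Completeness
open Classical
variable {Atom Agt : Type}

lemma BM_root_box {S : Agt → Bool → Prop} {Vr Vv Vu : Atom → Prop} {i : Agt}
    {χ : Form Atom Agt} :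
    Sat (BM S Vr Vv Vu) none (Form.box i χ) ↔
      ∀ b, S i b → Sat (BM S Vr Vv Vu) (some b) χ := by
  constructor
  · intro H b hb; exact H (some b) ⟨b, rfl, hb⟩
  · intro H x hx
    obtain ⟨b, rfl, hb⟩ := hx
    exact H b hb

lemma BM_root_dia {S : Agt → Bool → Prop} {Vr Vv Vu : Atom → Prop} {i : Agt}
    {χ : Form Atom Agt} :
    Sat (BM S Vr Vv Vu) none (Form.dia i χ) ↔
      ∃ b, S i b ∧ Sat (BM S Vr Vv Vu) (some b) χ := by
  constructor
  · intro H
    by_contra hc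
    push_neg at hc
    exact H (fun x hx hs => by
      obtain ⟨b, rfl, hb⟩ := hx
      exact hc b hb hs)
  · rintro ⟨b, hb, hs⟩ H
    exact H (some b) ⟨b, rfl, hb⟩ hs

/-- valuation making the literal of an RML true -/
abbrev Vsat (χ : Form Atom Agt) : Atom → Prop := fun q => litOf χ = Form.atom q
/-- valuation making the literal of an RML false -/
abbrev Vfal (χ : Form Atom Agt) : Atom → Prop := fun q => litOf χ = Form.neg (Form.atom q)

lemma entails_inCl : ∀ {φ : Form Atom Agt}, IsRML φ → ∀ {ψ : Form Atom Agt},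
    IsRML ψ → Entails φ ψ → InCl φ ψ := by
  intro φ hφ
  induction hφ with
  | pos p =>
      intro ψ hψ h
      cases hψ with
      | pos q =>
          by_cases hq : q = p
          · subst hq; exact InCl.pos q
          · have H := entails_iff.1 h
              (BM (fun _ b => b = true) (fun r => r = p) (fun _ => True) (fun _ => True))
              (BM_serial (fun _ => ⟨true, rfl⟩)) none rfl
            exact absurd H hq
      | neg q =>
          have H := entails_iff.1 h
            (BM (fun _ b => b = true) (fun r => r = p ∨ r = q) (fun _ => True) (fun _ => True))
            (BM_serial (fun _ => ⟨true, rfl⟩)) none (Or.inl rfl)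
          exact absurd (Or.inr rfl) H
      | box j hψ' =>
          rename_i ψ'
          have H := entails_iff.1 h
            (BM (fun _ b => b = false) (fun r => r = p) (fun _ => True) (Vfal ψ'))
            (BM_serial (fun _ => ⟨false, rfl⟩)) none rfl
          exact absurd (BM_root_box.1 H false rfl) (BM_leaf_false hψ')
      | dia j hψ' =>
          rename_i ψ'
          have H := entails_iff.1 h
            (BM (fun _ b => b = false) (fun r => r = p) (fun _ => True) (Vfal ψ'))
            (BM_serial (fun _ => ⟨false, rfl⟩)) none rfl
          obtain ⟨b, hb, hs⟩ := BM_root_dia.1 H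
          subst hb
          exact absurd hs (BM_leaf_false hψ')
  | neg p =>
      intro ψ hψ h
      cases hψ with
      | pos q =>
          have H := entails_iff.1 h
            (BM (fun _ b => b = true) (fun _ => False) (fun _ => True) (fun _ => True))
            (BM_serial (fun _ => ⟨true, rfl⟩)) none (fun f => f)
          exact (H : False).elim
      | neg q =>
          by_cases hq : q = p
          · subst hq; exact InCl.neg q
          · have H := entails_iff.1 h
              (BM (fun _ b => b = true) (fun r => r = q) (fun _ => True) (fun _ => True))
              (BM_serial (fun _ => ⟨true, rfl⟩)) none (fun e => hq e.symm)
            exact absurd rfl H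
      | box j hψ' =>
          rename_i ψ'
          have H := entails_iff.1 h
            (BM (fun _ b => b = false) (fun _ => False) (fun _ => True) (Vfal ψ'))
            (BM_serial (fun _ => ⟨false, rfl⟩)) none (fun f => f)
          exact absurd (BM_root_box.1 H false rfl) (BM_leaf_false hψ')
      | dia j hψ' =>
          rename_i ψ'
          have H := entails_iff.1 h
            (BM (fun _ b => b = false) (fun _ => False) (fun _ => True) (Vfal ψ'))
            (BM_serial (fun _ => ⟨false, rfl⟩)) none (fun f => f)
          obtain ⟨b, hb, hs⟩ := BM_root_dia.1 H
          subst hb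
          exact absurd hs (BM_leaf_false hψ')
  | box i hφ' ih =>
      rename_i φ'
      intro ψ hψ h
      cases hψ with
      | pos q =>
          have H := entails_iff.1 h
            (BM (fun _ b => b = true) (fun _ => False) (Vsat φ') (fun _ => True))
            (BM_serial (fun _ => ⟨true, rfl⟩)) none
            (BM_root_box.2 (fun b hb => by subst hb; exact BM_leaf_true hφ'))
          exact (H : False).elim
      | neg q =>
          have H := entails_iff.1 h
            (BM (fun _ b => b = true) (fun r => r = q) (Vsat φ') (fun _ => True))
            (BM_serial (fun _ => ⟨true, rfl⟩)) none
            (BM_root_box.2 (fun b hb => by subst hb; exact BM_leaf_true hφ'))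
          exact absurd rfl H
      | box j hψ' =>
          rename_i ψ'
          by_cases hij : j = i
          · subst hij
            exact InCl.boxBox j (ih hψ' (box_step h))
          · have H := entails_iff.1 h
              (BM (fun k b => if k = j then b = false else b = true) (fun _ => False)
                (Vsat φ') (Vfal ψ'))
              (BM_serial (fun k => by
                by_cases hk : k = j
                · exact ⟨false, by simp [hk]⟩
                · exact ⟨true, by simp [hk]⟩)) none
              (BM_root_box.2 (fun b hb => by
                have hb' : b = true := by
                  have hb2 : (if i = j then b = false else b = true) := hb
                  rwa [if_neg (fun hh : i = j => hij hh.symm)] at hb2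
                subst hb'
                exact BM_leaf_true hφ'))
            have hs := BM_root_box.1 H false (by simp)
            exact absurd hs (BM_leaf_false hψ')
      | dia j hψ' =>
          rename_i ψ'
          by_cases hij : j = i
          · subst hij
            exact InCl.boxDia j (ih hψ' (box_dia_step h))
          · have H := entails_iff.1 h
              (BM (fun k b => if k = j then b = false else b = true) (fun _ => False)
                (Vsat φ') (Vfal ψ'))
              (BM_serial (fun k => by
                by_cases hk : k = j
                · exact ⟨false, by simp [hk]⟩
                · exact ⟨true, by simp [hk]⟩)) none
              (BM_root_box.2 (fun b hb => by
                have hb' : b = true := by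
                  have hb2 : (if i = j then b = false else b = true) := hb
                  rwa [if_neg (fun hh : i = j => hij hh.symm)] at hb2
                subst hb'
                exact BM_leaf_true hφ'))
            obtain ⟨b, hb, hs⟩ := BM_root_dia.1 H
            have hb' : b = false := by simpa using hb
            subst hb'
            exact absurd hs (BM_leaf_false hψ')
  | dia i hφ' ih =>
      rename_i φ'
      intro ψ hψ h
      cases hψ with
      | pos q =>
          have H := entails_iff.1 h
            (BM (fun _ b => b = true) (fun _ => False) (Vsat φ') (fun _ => True))
            (BM_serial (fun _ => ⟨true, rfl⟩)) none
            (BM_root_dia.2 ⟨true, rfl, BM_leaf_true hφ'⟩)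
          exact (H : False).elim
      | neg q =>
          have H := entails_iff.1 h
            (BM (fun _ b => b = true) (fun r => r = q) (Vsat φ') (fun _ => True))
            (BM_serial (fun _ => ⟨true, rfl⟩)) none
            (BM_root_dia.2 ⟨true, rfl, BM_leaf_true hφ'⟩)
          exact absurd rfl H
      | box j hψ' =>
          rename_i ψ'
          by_cases hij : j = i
          · subst hij
            have H := entails_iff.1 h
              (BM (fun _ _ => True) (fun _ => False) (Vsat φ') (Vfal ψ'))
              (BM_serial (fun _ => ⟨true, trivial⟩)) none
              (BM_root_dia.2 ⟨true, trivial, BM_leaf_true hφ'⟩)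
            exact absurd (BM_root_box.1 H false trivial) (BM_leaf_false hψ')
          · have H := entails_iff.1 h
              (BM (fun k b => b = true → k ≠ j) (fun _ => False) (Vsat φ') (Vfal ψ'))
              (BM_serial (fun k => ⟨false, by simp⟩)) none
              (BM_root_dia.2 ⟨true, fun _ hh => hij hh.symm, BM_leaf_true hφ'⟩)
            exact absurd (BM_root_box.1 H false (by simp)) (BM_leaf_false hψ')
      | dia j hψ' =>
          rename_i ψ'
          by_cases hij : j = i
          · subst hij
            exact InCl.diaDia j (ih hψ' (dia_dia_step h))
          · have H := entails_iff.1 h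
              (BM (fun k b => b = true → k ≠ j) (fun _ => False) (Vsat φ') (Vfal ψ'))
              (BM_serial (fun k => ⟨false, by simp⟩)) none
              (BM_root_dia.2 ⟨true, fun _ hh => hij hh.symm, BM_leaf_true hφ'⟩)
            obtain ⟨b, hb, hs⟩ := BM_root_dia.1 H
            have hb' : b = false := by
              cases b
              · rfl
              · exact absurd rfl (hb rfl)
            subst hb'
            exact absurd hs (BM_leaf_false hψ')

end Completeness

/-- For RMLs `φ` and `ψ`, `φ ⊨ ψ` in KD_n iff `ψ ∈ Cl(φ)`,
i.e. iff `ψ` results from `φ` by replacing `B_i` with `◇_i` (same agent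
index) at some, possibly empty, set of modal positions. -/
theorem rml_entails_iff_inCl {Atom Agt : Type}
    (φ ψ : Form Atom Agt) (hφ : IsRML φ) (hψ : IsRML ψ) :
    Entails φ ψ ↔ InCl φ ψ := by
  exact ⟨fun h => entails_inCl hφ hψ h, inCl_entails⟩
end

section
/- Let P be a consistent PEKB and let ψ_1, …, ψ_k be RMLs. Then P ⊨ ψ_1 ∧ … ∧ ψ_k in KD_n if and only if for every j ∈ {1,…,k} there exists φ ∈ P with φ ⊨ ψ_j (equivalently, every ψ_j belongs to the upward closure ↑P); that is, entailment of conjunctions of RMLs from a consistent PEKB reduces to membership of each conjunct in the upward closure of the PEKB. -/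
/-- Conjunction of a list of formulae. -/
def bigAnd {Atom Agt : Type} (l : List (Form Atom Agt)) : Form Atom Agt :=
  l.foldr Form.and Form.top


namespace PEKB6

variable {Atom Agt : Type}

/-- Abstract RML: list of modalities (`true` = box) with agent, a sign, an atom. -/
abbrev Rml (Atom Agt : Type) := List (Bool × Agt) × Bool × Atom

def toForm : List (Bool × Agt) → Bool → Atom → Form Atom Agt
  | [], true, p => Form.atom p
  | [], false, p => Form.neg (Form.atom p)
  | (true, i) :: ms, s, p => Form.box i (toForm ms s p)
  | (false, i) :: ms, s, p => Form.dia i (toForm ms s p)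

def toF (r : Rml Atom Agt) : Form Atom Agt := toForm r.1 r.2.1 r.2.2

lemma rml_repr {φ : Form Atom Agt} (h : IsRML φ) : ∃ r : Rml Atom Agt, φ = toF r := by
  induction h with
  | pos p => exact ⟨([], true, p), rfl⟩
  | neg p => exact ⟨([], false, p), rfl⟩
  | box i _ ih => obtain ⟨⟨ms, s, p⟩, rfl⟩ := ih; exact ⟨((true, i) :: ms, s, p), rfl⟩
  | dia i _ ih => obtain ⟨⟨ms, s, p⟩, rfl⟩ := ih; exact ⟨((false, i) :: ms, s, p), rfl⟩

/-- Conflict of modality lists: same agents, and at each position at least one box. -/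
def confM : List (Bool × Agt) → List (Bool × Agt) → Prop
  | [], [] => True
  | (b1, i) :: t1, (b2, j) :: t2 => i = j ∧ (b1 = true ∨ b2 = true) ∧ confM t1 t2
  | _, _ => False

lemma confM_symm : ∀ {m1 m2 : List (Bool × Agt)}, confM m1 m2 → confM m2 m1
  | [], [], h => h
  | (b1, i) :: t1, (b2, j) :: t2, ⟨h1, h2, h3⟩ => ⟨h1.symm, h2.symm, confM_symm h3⟩
  | [], _ :: _, h => h.elim
  | _ :: _, [], h => h.elim

/-- Conflict of RMLs: conflicting modalities, same atom, opposite signs. -/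
def Conf (r1 r2 : Rml Atom Agt) : Prop :=
  confM r1.1 r2.1 ∧ r1.2.2 = r2.2.2 ∧ r1.2.1 ≠ r2.2.1

lemma Conf.symm {r1 r2 : Rml Atom Agt} (h : Conf r1 r2) : Conf r2 r1 :=
  ⟨confM_symm h.1, h.2.1.symm, fun e => h.2.2 e.symm⟩

/-- Conflicting RMLs cannot hold at the same world of a serial structure. -/
lemma conf_unsat : ∀ (m1 m2 : List (Bool × Agt)) (s1 s2 : Bool) (p : Atom)
    (M : Kripke Atom Agt), M.Serial → ∀ w : M.W,
    confM m1 m2 → s1 ≠ s2 →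
    Sat M w (toForm m1 s1 p) → Sat M w (toForm m2 s2 p) → False := by
  intro m1
  induction m1 with
  | nil =>
    intro m2 s1 s2 p M hser w hc hs h1 h2
    cases m2 with
    | nil =>
      cases s1 <;> cases s2 <;> simp_all [toForm, Sat]
    | cons m t => exact hc
  | cons m t ih =>
    intro m2 s1 s2 p M hser w hc hs h1 h2
    obtain ⟨b1, i⟩ := m
    cases m2 with
    | nil => exact hc
    | cons m' t2 =>
      obtain ⟨b2, j⟩ := m'
      obtain ⟨rfl, hb, hct⟩ := hc
      cases b1 <;> cases b2
      · simp at hb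
      · -- b1 = false (dia), b2 = true (box)
        simp only [toForm, Form.dia, Sat] at h1 h2
        rw [not_forall] at h1
        obtain ⟨v, hv⟩ := h1
        rw [Classical.not_imp] at hv
        obtain ⟨hr, hsat⟩ := hv
        rw [not_not] at hsat
        exact ih t2 s1 s2 p M hser v hct hs hsat (h2 v hr)
      · -- b1 = true (box), b2 = false (dia)
        simp only [toForm, Form.dia, Sat] at h1 h2
        rw [not_forall] at h2
        obtain ⟨v, hv⟩ := h2
        rw [Classical.not_imp] at hv
        obtain ⟨hr, hsat⟩ := hv
        rw [not_not] at hsat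
        exact ih t2 s1 s2 p M hser v hct hs (h1 v hr) hsat
      · -- both boxes
        obtain ⟨v, hr⟩ := hser i w
        exact ih t2 s1 s2 p M hser v hct hs (h1 v hr) (h2 v hr)

/-- Negation of an RML in RML form. -/
def negR (r : Rml Atom Agt) : Rml Atom Agt :=
  (r.1.map (fun m => (!m.1, m.2)), !r.2.1, r.2.2)

lemma sat_negR (M : Kripke Atom Agt) (w : M.W) :
    ∀ (ms : List (Bool × Agt)) (s : Bool) (p : Atom),
    Sat M w (toF (negR (ms, s, p))) ↔ ¬ Sat M w (toForm ms s p) := by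
  suffices h : ∀ (ms : List (Bool × Agt)) (s : Bool) (p : Atom) (w : M.W),
      Sat M w (toForm (ms.map fun m => (!m.1, m.2)) (!s) p) ↔ ¬ Sat M w (toForm ms s p) by
    intro ms s p; exact h ms s p w
  intro ms
  induction ms with
  | nil =>
    intro s p w
    cases s <;> simp [toForm, Sat]
  | cons m t ih =>
    intro s p w
    obtain ⟨b, i⟩ := m
    cases b
    · -- original diamond, negation is a box
      show (∀ v, M.R i w v → Sat M v (toForm (t.map fun m => (!m.1, m.2)) (!s) p)) ↔
        ¬ Sat M w (Form.neg (Form.box i (Form.neg (toForm t s p))))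
      constructor
      · intro h hc
        apply hc
        intro v hr hT
        exact (ih s p v).mp (h v hr) hT
      · intro h v hr
        rw [ih s p v]
        intro hT
        apply h
        intro hbox
        exact hbox v hr hT
    · -- original box, negation is a diamond
      show (¬ ∀ v, M.R i w v → ¬ Sat M v (toForm (t.map fun m => (!m.1, m.2)) (!s) p)) ↔
        ¬ (∀ v, M.R i w v → Sat M v (toForm t s p))
      constructor
      · intro h hc
        apply h
        intro v hr hN
        exact (ih s p v).mp hN (hc v hr)
      · intro h hall
        apply h
        intro v hr
        by_contra hT
        exact hall v hr ((ih s p v).mpr hT)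

/-! ### The canonical tree model -/

/-- Branch labels: an agent together with an optional residual RML. -/
abbrev Lab (Atom Agt : Type) := Agt × Option (Rml Atom Agt)

/-- Residual demands after one step. -/
def step (i : Agt) (o : Option (Rml Atom Agt)) (D : Set (Rml Atom Agt)) :
    Set (Rml Atom Agt) :=
  {r | ((true, i) :: r.1, r.2) ∈ D ∨ (((false, i) :: r.1, r.2) ∈ D ∧ o = some r)}

/-- Demands along a (reversed) path from the root. -/
def demands (S : Set (Rml Atom Agt)) : List (Lab Atom Agt) → Set (Rml Atom Agt)
  | [] => S
  | (i, o) :: w => step i o (demands S w)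

/-- The canonical model of a set of RMLs. -/
def canM (S : Set (Rml Atom Agt)) : Kripke Atom Agt where
  W := List (Lab Atom Agt)
  val w p := ([], true, p) ∈ demands S w
  R i w v := ∃ o, v = (i, o) :: w

lemma canM_serial (S : Set (Rml Atom Agt)) : (canM S).Serial :=
  fun i w => ⟨(i, none) :: w, none, rfl⟩

/-- Pairwise non-conflict is preserved along paths. -/
lemma demands_nc (S : Set (Rml Atom Agt))
    (hS : ∀ r1 ∈ S, ∀ r2 ∈ S, ¬ Conf r1 r2) :
    ∀ w : List (Lab Atom Agt), ∀ r1 ∈ demands S w, ∀ r2 ∈ demands S w, ¬ Conf r1 r2 := by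
  intro w
  induction w with
  | nil => exact hS
  | cons lo w ih =>
    obtain ⟨i, o⟩ := lo
    rintro ⟨m1, s1, p1⟩ h1 ⟨m2, s2, p2⟩ h2 ⟨hcm, hp, hs⟩
    simp only [demands, step, Set.mem_setOf_eq] at h1 h2
    rcases h1 with h1 | ⟨h1, ho1⟩ <;> rcases h2 with h2 | ⟨h2, ho2⟩
    · exact ih _ h1 _ h2 ⟨⟨rfl, Or.inl rfl, hcm⟩, hp, hs⟩
    · exact ih _ h1 _ h2 ⟨⟨rfl, Or.inl rfl, hcm⟩, hp, hs⟩
    · exact ih _ h1 _ h2 ⟨⟨rfl, Or.inr rfl, hcm⟩, hp, hs⟩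
    · rw [ho1] at ho2
      injection ho2 with he
      exact hs (congrArg (fun r : Rml Atom Agt => r.2.1) he)

/-- Every demand is satisfied at its world. -/
lemma demands_sat (S : Set (Rml Atom Agt))
    (hS : ∀ r1 ∈ S, ∀ r2 ∈ S, ¬ Conf r1 r2) :
    ∀ (ms : List (Bool × Agt)) (s : Bool) (p : Atom) (w : List (Lab Atom Agt)),
      (ms, s, p) ∈ demands S w → Sat (canM S) w (toForm ms s p) := by
  intro ms
  induction ms with
  | nil =>
    intro s p w hmem
    cases s
    · -- negative literal
      intro hval
      exact demands_nc S hS w _ hmem _ hval ⟨trivial, rfl, by simp⟩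
    · exact hmem
  | cons m t ih =>
    intro s p w hmem
    obtain ⟨b, i⟩ := m
    cases b
    · -- diamond
      intro hall
      have hmem' : (t, s, p) ∈ demands S (((i, some ((t, s, p) : Rml Atom Agt))) :: w) :=
        Or.inr ⟨hmem, rfl⟩
      exact hall _ ⟨some (t, s, p), rfl⟩ (ih s p _ hmem')
    · -- box
      rintro v ⟨o, rfl⟩
      exact ih s p _ (Or.inl hmem)

/-- A pairwise non-conflicting set of RMLs is satisfiable. -/
lemma nc_consistent (S : Set (Rml Atom Agt))
    (hS : ∀ r1 ∈ S, ∀ r2 ∈ S, ¬ Conf r1 r2) :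
    ∃ (M : Kripke Atom Agt), M.Serial ∧ ∃ w : M.W, ∀ r ∈ S, Sat M w (toF r) := by
  refine ⟨canM S, canM_serial S, [], ?_⟩
  rintro ⟨ms, s, p⟩ hr
  exact demands_sat S hS ms s p [] hr

lemma sat_bigAnd (M : Kripke Atom Agt) (w : M.W) (l : List (Form Atom Agt)) :
    Sat M w (bigAnd l) ↔ ∀ ψ ∈ l, Sat M w ψ := by
  induction l with
  | nil => simp [bigAnd, Sat]
  | cons φ t ih =>
    simp only [bigAnd, List.foldr] at ih ⊢
    constructor
    · rintro ⟨h1, h2⟩ ψ hψ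
      rcases List.mem_cons.mp hψ with rfl | hψ
      · exact h1
      · exact ih.mp h2 ψ hψ
    · intro h
      exact ⟨h φ List.mem_cons_self, ih.mpr fun ψ hψ => h ψ (List.mem_cons_of_mem φ hψ)⟩

end PEKB6

/-- A consistent PEKB `P` entails a conjunction of RMLs
`ψ_1 ∧ … ∧ ψ_k` in KD_n iff each conjunct is entailed by some single element
of `P` (i.e. belongs to the upward closure `↑P`). -/
theorem pekb_conjunction_entailment {Atom Agt : Type}
    (P : Set (Form Atom Agt)) (hP : IsPEKB P) (hcons : Consistent P)
    (l : List (Form Atom Agt)) (hl : ∀ ψ ∈ l, IsRML ψ) :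
    SetEntails P (bigAnd l) ↔ ∀ ψ ∈ l, ∃ φ ∈ P, Entails φ ψ := by
  classical
  constructor
  · -- hard direction
    intro hent ψ hψ
    -- P entails ψ
    have hPψ : SetEntails P ψ := by
      intro M hser w hw
      exact (PEKB6.sat_bigAnd M w l).mp (hent M hser w hw) ψ hψ
    by_contra hno
    push_neg at hno
    obtain ⟨⟨msψ, sψ, pψ⟩, rfl⟩ := PEKB6.rml_repr (hl ψ hψ)
    -- the set of abstract RMLs: representations of P plus the negation of ψ
    set rψ : PEKB6.Rml Atom Agt := (msψ, sψ, pψ) with hrψ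
    set S : Set (PEKB6.Rml Atom Agt) :=
      {r | PEKB6.toF r ∈ P} ∪ {PEKB6.negR rψ} with hSdef
    have hnc : ∀ r1 ∈ S, ∀ r2 ∈ S, ¬ PEKB6.Conf r1 r2 := by
      have key : ∀ r1 ∈ S, ∀ r2 ∈ S,
          (∃ (M : Kripke Atom Agt), M.Serial ∧ ∃ w : M.W,
            Sat M w (PEKB6.toF r1) ∧ Sat M w (PEKB6.toF r2)) → ¬ PEKB6.Conf r1 r2 := by
        rintro ⟨m1, s1, p1⟩ - ⟨m2, s2, p2⟩ - ⟨M, hser, w, h1, h2⟩ ⟨hcm, hp, hsgn⟩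
        simp only at hp
        subst hp
        exact PEKB6.conf_unsat m1 m2 s1 s2 p1 M hser w hcm hsgn h1 h2
      intro r1 hr1 r2 hr2
      rcases hr1 with hr1 | hr1 <;> rcases hr2 with hr2 | hr2
      · -- both from P: use consistency of P
        apply key r1 (Or.inl hr1) r2 (Or.inl hr2)
        obtain ⟨M, hser, w, hw⟩ := hcons
        exact ⟨M, hser, w, hw _ hr1, hw _ hr2⟩
      · -- r1 from P, r2 = ¬ψ : use non-entailment
        apply key r1 (Or.inl hr1) r2 (Or.inr hr2)
        have hne := hno (PEKB6.toF r1) hr1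
        rw [Entails, SetEntails] at hne
        push_neg at hne
        obtain ⟨M, hser, w, hw, hns⟩ := hne
        refine ⟨M, hser, w, hw _ rfl, ?_⟩
        rw [Set.mem_singleton_iff] at hr2
        rw [hr2]
        exact (PEKB6.sat_negR M w msψ sψ pψ).mpr hns
      · -- symmetric
        apply key r1 (Or.inr hr1) r2 (Or.inl hr2)
        have hne := hno (PEKB6.toF r2) hr2
        rw [Entails, SetEntails] at hne
        push_neg at hne
        obtain ⟨M, hser, w, hw, hns⟩ := hne
        refine ⟨M, hser, w, ?_, hw _ rfl⟩
        rw [Set.mem_singleton_iff] at hr1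
        rw [hr1]
        exact (PEKB6.sat_negR M w msψ sψ pψ).mpr hns
      · -- both are ¬ψ : no conflict since signs are equal
        rw [Set.mem_singleton_iff] at hr1 hr2
        subst hr1; subst hr2
        rintro ⟨-, -, hsgn⟩
        exact hsgn rfl
    obtain ⟨M, hser, w, hw⟩ := PEKB6.nc_consistent S hnc
    have hPsat : ∀ φ ∈ P, Sat M w φ := by
      intro φ hφ
      obtain ⟨r, rfl⟩ := PEKB6.rml_repr (hP.2 φ hφ)
      exact hw r (Or.inl hφ)
    have hψsat := hPψ M hser w hPsat
    have hnψ := hw (PEKB6.negR rψ) (Or.inr rfl)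
    exact (PEKB6.sat_negR M w msψ sψ pψ).mp hnψ hψsat
  · -- easy direction
    intro h M hser w hw
    rw [PEKB6.sat_bigAnd]
    intro ψ hψ
    obtain ⟨φ, hφP, hφψ⟩ := h ψ hψ
    exact hφψ M hser w (by intro χ hχ; rw [Set.mem_singleton_iff] at hχ; subst hχ; exact hw _ hφP)
end

section
/- Define the syntactic entailment relation P ⊢ ψ between PEKBs P and RMLs ψ recursively by: P ⊢ ℓ iff ℓ ∈ P, for ℓ a propositional literal p or ¬p; P ⊢ B_i φ iff there exists an RML ψ with B_i ψ ∈ P and {ψ} ⊢ φ; P ⊢ ◇_i φ iff there exists an RML ψ with B_i ψ ∈ P or ◇_i ψ ∈ P, and {ψ} ⊢ φ. Then this procedure is sound and complete for consistent PEKBs in KD_n: for every consistent PEKB P and every RML ψ, P ⊢ ψ if and only if P ⊨ ψ. -/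
/-- Syntactic entailment of an RML from a PEKB. -/
inductive SynEnt {Atom Agt : Type} : Set (Form Atom Agt) → Form Atom Agt → Prop
  | litPos {S : Set (Form Atom Agt)} (p : Atom) :
      Form.atom p ∈ S → SynEnt S (Form.atom p)
  | litNeg {S : Set (Form Atom Agt)} (p : Atom) :
      Form.neg (Form.atom p) ∈ S → SynEnt S (Form.neg (Form.atom p))
  | box {S : Set (Form Atom Agt)} (i : Agt) {φ ψ : Form Atom Agt} :
      Form.box i ψ ∈ S → SynEnt {ψ} φ → SynEnt S (Form.box i φ)
  | diaOfBox {S : Set (Form Atom Agt)} (i : Agt) {φ ψ : Form Atom Agt} :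
      Form.box i ψ ∈ S → SynEnt {ψ} φ → SynEnt S (Form.dia i φ)
  | diaOfDia {S : Set (Form Atom Agt)} (i : Agt) {φ ψ : Form Atom Agt} :
      Form.dia i ψ ∈ S → SynEnt {ψ} φ → SynEnt S (Form.dia i φ)


section Aux

variable {Atom Agt : Type}

/-- Soundness of `SynEnt`. -/
lemma synEnt_sound {S : Set (Form Atom Agt)} {φ : Form Atom Agt}
    (h : SynEnt S φ) : SetEntails S φ := by
  induction h with
  | litPos p hm => exact fun M _ w hw => hw _ hm
  | litNeg p hm => exact fun M _ w hw => hw _ hm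
  | box i hm _ ih =>
      intro M hser w hw
      intro v hv
      exact ih M hser v (by
        intro χ hχ
        rcases hχ with rfl
        exact hw _ hm v hv)
  | diaOfBox i hm _ ih =>
      intro M hser w hw
      simp only [Form.dia, Sat]
      intro hall
      obtain ⟨v, hv⟩ := hser i w
      have hψv := hw _ hm v hv
      have := ih M hser v (by intro χ hχ; rcases hχ with rfl; exact hψv)
      exact hall v hv this
  | diaOfDia i hm _ ih =>
      intro M hser w hw
      simp only [Form.dia, Sat]
      intro hall
      have hd := hw _ hm
      simp only [Form.dia, Sat] at hd
      push_neg at hd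
      obtain ⟨v, hv, hψv⟩ := hd
      have := ih M hser v (by intro χ hχ; rcases hχ with rfl; exact hψv)
      exact hall v hv this

/-- The set of formulae believed by agent `i` at `S`. -/
def Boxset (i : Agt) (S : Set (Form Atom Agt)) : Set (Form Atom Agt) :=
  {ψ | Form.box i ψ ∈ S}

/-- Successor relation of the canonical model. -/
def Succ (i : Agt) (S T : Set (Form Atom Agt)) : Prop :=
  T = Boxset i S ∨ ∃ χ, Form.dia i χ ∈ S ∧ T = insert χ (Boxset i S)

/-- Canonical model with default valuation `d`. -/
def CanM (Atom Agt : Type) (d : Atom → Prop) : Kripke Atom Agt where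
  W := Set (Form Atom Agt)
  val := fun S p => Form.atom p ∈ S ∨ (Form.neg (Form.atom p) ∉ S ∧ d p)
  R := Succ

lemma canM_serial (d : Atom → Prop) : (CanM Atom Agt d).Serial :=
  fun i S => ⟨Boxset i S, Or.inl rfl⟩

lemma cons_not_both {S : Set (Form Atom Agt)} (h : Consistent S) {p : Atom}
    (h1 : Form.atom p ∈ S) (h2 : Form.neg (Form.atom p) ∈ S) : False := by
  obtain ⟨M, _, w, hw⟩ := h
  exact hw _ h2 (hw _ h1)

lemma cons_boxset {S : Set (Form Atom Agt)} (h : Consistent S) (i : Agt) :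
    Consistent (Boxset i S) := by
  obtain ⟨M, hser, w, hw⟩ := h
  obtain ⟨v, hv⟩ := hser i w
  exact ⟨M, hser, v, fun ψ hψ => hw _ hψ v hv⟩

lemma cons_insert {S : Set (Form Atom Agt)} (h : Consistent S) {i : Agt}
    {χ : Form Atom Agt} (hχ : Form.dia i χ ∈ S) :
    Consistent (insert χ (Boxset i S)) := by
  obtain ⟨M, hser, w, hw⟩ := h
  have hd := hw _ hχ
  simp only [Form.dia, Sat] at hd
  push_neg at hd
  obtain ⟨v, hv, hs⟩ := hd
  refine ⟨M, hser, v, ?_⟩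
  intro ψ hψ
  rcases hψ with rfl | hψ
  · exact hs
  · exact hw _ hψ v hv

lemma cons_succ {S T : Set (Form Atom Agt)} (h : Consistent S) {i : Agt}
    (hT : Succ i S T) : Consistent T := by
  rcases hT with rfl | ⟨χ, hχ, rfl⟩
  · exact cons_boxset h i
  · exact cons_insert h hχ

/-- `SynEnt` is monotone in the knowledge base. -/
lemma synEnt_mono {S S' : Set (Form Atom Agt)} (hS : S ⊆ S') {φ : Form Atom Agt}
    (h : SynEnt S φ) : SynEnt S' φ := by
  cases h with
  | litPos p hm => exact SynEnt.litPos p (hS hm)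
  | litNeg p hm => exact SynEnt.litNeg p (hS hm)
  | box i hm h2 => exact SynEnt.box i (hS hm) h2
  | diaOfBox i hm h2 => exact SynEnt.diaOfBox i (hS hm) h2
  | diaOfDia i hm h2 => exact SynEnt.diaOfDia i (hS hm) h2

/-- `SynEnt` only ever uses a single member of the knowledge base. -/
lemma synEnt_single {S : Set (Form Atom Agt)} {φ : Form Atom Agt}
    (h : SynEnt S φ) : ∃ χ ∈ S, SynEnt {χ} φ := by
  cases h with
  | litPos p hm => exact ⟨_, hm, SynEnt.litPos p rfl⟩
  | litNeg p hm => exact ⟨_, hm, SynEnt.litNeg p rfl⟩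
  | box i hm h2 => exact ⟨_, hm, SynEnt.box i rfl h2⟩
  | diaOfBox i hm h2 => exact ⟨_, hm, SynEnt.diaOfBox i rfl h2⟩
  | diaOfDia i hm h2 => exact ⟨_, hm, SynEnt.diaOfDia i rfl h2⟩

/-- Every member of a knowledge base is syntactically entailed. -/
lemma mem_synEnt {φ : Form Atom Agt} (h : IsRML φ) :
    ∀ {S : Set (Form Atom Agt)}, φ ∈ S → SynEnt S φ := by
  induction h with
  | pos p => exact fun hm => SynEnt.litPos p hm
  | neg p => exact fun hm => SynEnt.litNeg p hm
  | box i _ ih => exact fun hm => SynEnt.box i hm (ih rfl)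
  | dia i _ ih => exact fun hm => SynEnt.diaOfDia i hm (ih rfl)

/-- Inversion for `box`. -/
lemma synEnt_box_inv {S : Set (Form Atom Agt)} {i : Agt} {φ : Form Atom Agt}
    (h : SynEnt S (Form.box i φ)) : ∃ ψ, Form.box i ψ ∈ S ∧ SynEnt {ψ} φ := by
  cases h with
  | box i hm h2 => exact ⟨_, hm, h2⟩

/-- Inversion for `dia`. -/
lemma synEnt_dia_inv {S : Set (Form Atom Agt)} {i : Agt} {φ : Form Atom Agt}
    (h : SynEnt S (Form.dia i φ)) :
    ∃ ψ, (Form.box i ψ ∈ S ∨ Form.dia i ψ ∈ S) ∧ SynEnt {ψ} φ := by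
  cases h with
  | diaOfBox i hm h2 => exact ⟨_, Or.inl hm, h2⟩
  | diaOfDia i hm h2 => exact ⟨_, Or.inr hm, h2⟩

/-- Truth lemma, positive direction: at consistent worlds of the canonical
model, syntactic entailment implies satisfaction. -/
lemma truth_pos (d : Atom → Prop) {φ : Form Atom Agt} (hφ : IsRML φ) :
    ∀ S : Set (Form Atom Agt), Consistent S → SynEnt S φ → Sat (CanM Atom Agt d) S φ := by
  induction hφ with
  | pos p =>
      intro S _ h
      cases h with
      | litPos p hm => exact Or.inl hm
  | neg p =>
      intro S hcons h
      cases h with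
      | litNeg p hm =>
          simp only [Sat, CanM]
          rintro (h1 | ⟨h1, _⟩)
          · exact cons_not_both hcons h1 hm
          · exact h1 hm
  | box i hφ ih =>
      rename_i φ
      intro S hcons h
      obtain ⟨ψ, hm, h2⟩ := synEnt_box_inv h
      show ∀ T : Set (Form Atom Agt), Succ i S T → Sat (CanM Atom Agt d) T φ
      intro T hT
      have hψT : ψ ∈ T := by
        rcases hT with rfl | ⟨χ, _, rfl⟩
        · exact hm
        · exact Set.mem_insert_of_mem _ hm
      exact ih T (cons_succ hcons hT)
        (synEnt_mono (Set.singleton_subset_iff.mpr hψT) h2)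
  | dia i hφ ih =>
      rename_i φ
      intro S hcons h
      obtain ⟨ψ, hm, h2⟩ := synEnt_dia_inv h
      simp only [Form.dia, Sat]
      intro hall
      rcases hm with hm | hm
      · have hT : Succ i S (Boxset i S) := Or.inl rfl
        have hmem : ψ ∈ Boxset i S := hm
        have hsat : Sat (CanM Atom Agt d) (Boxset i S) φ :=
          ih (Boxset i S) (cons_succ hcons hT)
            (synEnt_mono (Set.singleton_subset_iff.mpr hmem) h2)
        exact hall _ hT hsat
      · have hT : Succ i S (insert ψ (Boxset i S)) := Or.inr ⟨ψ, hm, rfl⟩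
        have hsat : Sat (CanM Atom Agt d) ((insert ψ (Boxset i S) : Set (Form Atom Agt))) φ :=
          ih ((insert ψ (Boxset i S) : Set (Form Atom Agt))) (cons_succ hcons hT)
            (synEnt_mono (Set.singleton_subset_iff.mpr (Set.mem_insert _ _)) h2)
        exact hall _ hT hsat

/-- Compatibility of the default valuation `d` with the innermost literal. -/
def dOK (d : Atom → Prop) : Form Atom Agt → Prop
  | Form.atom p => ¬ d p
  | Form.neg (Form.atom p) => d p
  | Form.box _ φ => dOK d φ
  | Form.neg (Form.box _ (Form.neg φ)) => dOK d φ
  | _ => True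

lemma exists_dOK {ψ : Form Atom Agt} (h : IsRML ψ) : ∃ d, dOK d ψ := by
  induction h with
  | pos p => exact ⟨fun _ => False, by simp [dOK]⟩
  | neg p => exact ⟨fun _ => True, by simp [dOK]⟩
  | box i _ ih => obtain ⟨d, hd⟩ := ih; exact ⟨d, by simpa [dOK] using hd⟩
  | dia i _ ih =>
      obtain ⟨d, hd⟩ := ih
      exact ⟨d, by simpa [Form.dia, dOK] using hd⟩

/-- Truth lemma, negative direction: with a compatible default valuation,
non-entailment implies non-satisfaction at consistent worlds. -/
lemma truth_neg (d : Atom → Prop) {ψ : Form Atom Agt} (hψ : IsRML ψ)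
    (hd : dOK d ψ) :
    ∀ S : Set (Form Atom Agt), Consistent S → ¬ SynEnt S ψ →
      ¬ Sat (CanM Atom Agt d) S ψ := by
  induction hψ with
  | pos p =>
      intro S _ h hs
      simp only [dOK] at hd
      rcases hs with h1 | ⟨_, h2⟩
      · exact h (SynEnt.litPos p h1)
      · exact hd h2
  | neg p =>
      intro S _ h hs
      simp only [dOK] at hd
      exact hs (Or.inr ⟨fun hm => h (SynEnt.litNeg p hm), hd⟩)
  | box i hφ ih =>
      rename_i φ
      intro S hcons h hs
      simp only [dOK] at hd
      have hns : ¬ SynEnt (Boxset i S) φ := by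
        intro hse
        obtain ⟨χ, hχ, h1⟩ := synEnt_single hse
        exact h (SynEnt.box i hχ h1)
      exact ih hd _ (cons_boxset hcons i) hns (hs _ (Or.inl rfl))
  | dia i hφ ih =>
      rename_i φ
      intro S hcons h hs
      simp only [dOK, Form.dia] at hd
      simp only [Form.dia, Sat, not_not] at hs
      refine hs ?_
      intro T hT
      have hns : ¬ SynEnt T φ := by
        intro hse
        obtain ⟨χ, hχ, h1⟩ := synEnt_single hse
        rcases hT with rfl | ⟨ρ, hρ, rfl⟩
        · exact h (SynEnt.diaOfBox i hχ h1)
        · rcases hχ with rfl | hχ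
          · exact h (SynEnt.diaOfDia i hρ h1)
          · exact h (SynEnt.diaOfBox i hχ h1)
      exact ih hd T (cons_succ hcons hT) hns

end Aux

/-- The recursive syntactic entailment procedure `SynEnt` is
sound and complete for consistent PEKBs in KD_n. -/
theorem synEnt_sound_and_complete {Atom Agt : Type}
    (P : Set (Form Atom Agt)) (hP : IsPEKB P) (hcons : Consistent P)
    (ψ : Form Atom Agt) (hψ : IsRML ψ) :
    SynEnt P ψ ↔ SetEntails P ψ := by
  constructor
  · exact synEnt_sound
  · intro hent
    by_contra h
    obtain ⟨d, hd⟩ := exists_dOK hψ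
    have hsatP : ∀ φ ∈ P, Sat (CanM Atom Agt d) P φ := fun φ hφ =>
      truth_pos d (hP.2 φ hφ) P hcons (mem_synEnt (hP.2 φ hφ) hφ)
    have := hent (CanM Atom Agt d) (canM_serial d) P hsatP
    exact truth_neg d hψ hd P hcons h this
end
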